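/- arXiv:0907.4347 — 12 statements merged into one kernel-verified Lean document; each statement's English description precedes it below -/
import Mathlib

section
/- For points (x1,y1), (x2,y2) on the twisted Edwards curve ax² + y² = 1 + dx²y² over a field k of characteristic ≠ 2, if the denominators 1 + d x1 x2 y1 y2 and 1 − d x1 x2 y1 y2 are nonzero, then the sum point ((x1y2 + x2y1)/(1 + d x1x2y1y2), (y1y2 − a x1x2)/(1 − d x1x2y1y2)) also lies on the curve ax² + y² = 1 + dx²y². -/
/-!
In the coordinates `s = x y`, `r = a x² + y²`, `q = y² - a x²` one has `q² = r² - 4 a s²`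
identically, and the curve is `r = 1 + d s²`. For the numerators `A = x₁ y₂ + x₂ y₁` and
`B = y₁ y₂ - a x₁ x₂` of the sum, Brahmagupta-type identities give
`a A² + B² = r₁ r₂`, `a A² - B² = 4 a s₁ s₂ - q₁ q₂` and `A B = s₁ q₂ + s₂ q₁`.
With `t = d s₁ s₂`, the cleared curve equation `a A² (1 - t)² + B² (1 + t)² = (1 - t²)² + d (A B)²`
is a combination of these in which the `q₁ q₂` terms cancel; eliminating `q₁²`, `q₂²` leaves a
polynomial identity in `d s₁²` and `d s₂²`.
-/

section
variable {R : Type*} [CommRing R] (a d : R)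

theorem edwards_sq_sub_sq_of_mem {x y : R} (h : a * x ^ 2 + y ^ 2 = 1 + d * x ^ 2 * y ^ 2) :
    (y ^ 2 - a * x ^ 2) ^ 2 = (1 + d * (x * y) ^ 2) ^ 2 - 4 * a * (x * y) ^ 2 := by
  linear_combination (a * x ^ 2 + y ^ 2 + 1 + d * x ^ 2 * y ^ 2) * h

theorem edwards_cleared_of_sum_diff_mul (A B s₁ s₂ q₁ q₂ : R)
    (hsum : a * A ^ 2 + B ^ 2 = (1 + d * s₁ ^ 2) * (1 + d * s₂ ^ 2))
    (hdiff : a * A ^ 2 - B ^ 2 = 4 * a * s₁ * s₂ - q₁ * q₂)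
    (hmul : A * B = s₁ * q₂ + s₂ * q₁)
    (hq₁ : q₁ ^ 2 = (1 + d * s₁ ^ 2) ^ 2 - 4 * a * s₁ ^ 2)
    (hq₂ : q₂ ^ 2 = (1 + d * s₂ ^ 2) ^ 2 - 4 * a * s₂ ^ 2) :
    a * A ^ 2 * (1 - d * s₁ * s₂) ^ 2 + B ^ 2 * (1 + d * s₁ * s₂) ^ 2
      = ((1 + d * s₁ * s₂) * (1 - d * s₁ * s₂)) ^ 2 + d * (A * B) ^ 2 := by
  linear_combination (1 + (d * s₁ * s₂) ^ 2) * hsum - 2 * (d * s₁ * s₂) * hdiff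
    - d * (A * B + s₁ * q₂ + s₂ * q₁) * hmul - d * s₁ ^ 2 * hq₂ - d * s₂ ^ 2 * hq₁

theorem edwards_add_mem_cleared {x₁ y₁ x₂ y₂ : R}
    (h₁ : a * x₁ ^ 2 + y₁ ^ 2 = 1 + d * x₁ ^ 2 * y₁ ^ 2)
    (h₂ : a * x₂ ^ 2 + y₂ ^ 2 = 1 + d * x₂ ^ 2 * y₂ ^ 2) :
    a * (x₁ * y₂ + x₂ * y₁) ^ 2 * (1 - d * x₁ * x₂ * y₁ * y₂) ^ 2
        + (y₁ * y₂ - a * x₁ * x₂) ^ 2 * (1 + d * x₁ * x₂ * y₁ * y₂) ^ 2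
      = ((1 + d * x₁ * x₂ * y₁ * y₂) * (1 - d * x₁ * x₂ * y₁ * y₂)) ^ 2
          + d * ((x₁ * y₂ + x₂ * y₁) * (y₁ * y₂ - a * x₁ * x₂)) ^ 2 := by
  have hsum : a * (x₁ * y₂ + x₂ * y₁) ^ 2 + (y₁ * y₂ - a * x₁ * x₂) ^ 2
      = (1 + d * (x₁ * y₁) ^ 2) * (1 + d * (x₂ * y₂) ^ 2) := by
    rw [mul_pow, mul_pow, ← mul_assoc, ← mul_assoc, ← h₁, ← h₂]
    ring
  have key := edwards_cleared_of_sum_diff_mul a d (x₁ * y₂ + x₂ * y₁) (y₁ * y₂ - a * x₁ * x₂)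
    (x₁ * y₁) (x₂ * y₂) (y₁ ^ 2 - a * x₁ ^ 2) (y₂ ^ 2 - a * x₂ ^ 2) hsum (by ring) (by ring)
    (edwards_sq_sub_sq_of_mem a d h₁) (edwards_sq_sub_sq_of_mem a d h₂)
  linear_combination key

end

theorem edwards_mem_of_div {K : Type*} [Field K] {a d A B D₁ D₂ : K} (h₁ : D₁ ≠ 0) (h₂ : D₂ ≠ 0)
    (h : a * A ^ 2 * D₂ ^ 2 + B ^ 2 * D₁ ^ 2 = (D₁ * D₂) ^ 2 + d * (A * B) ^ 2) :
    a * (A / D₁) ^ 2 + (B / D₂) ^ 2 = 1 + d * (A / D₁) ^ 2 * (B / D₂) ^ 2 := by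
  field_simp
  linear_combination h

theorem edwards_add_closed_general {k : Type*} [Field k] (a d x1 y1 x2 y2 : k)
    (h1 : a * x1 ^ 2 + y1 ^ 2 = 1 + d * x1 ^ 2 * y1 ^ 2)
    (h2 : a * x2 ^ 2 + y2 ^ 2 = 1 + d * x2 ^ 2 * y2 ^ 2)
    (hden1 : 1 + d * x1 * x2 * y1 * y2 ≠ 0)
    (hden2 : 1 - d * x1 * x2 * y1 * y2 ≠ 0) :
    a * ((x1 * y2 + x2 * y1) / (1 + d * x1 * x2 * y1 * y2)) ^ 2
        + ((y1 * y2 - a * x1 * x2) / (1 - d * x1 * x2 * y1 * y2)) ^ 2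
      = 1 + d * ((x1 * y2 + x2 * y1) / (1 + d * x1 * x2 * y1 * y2)) ^ 2
          * ((y1 * y2 - a * x1 * x2) / (1 - d * x1 * x2 * y1 * y2)) ^ 2 :=
  edwards_mem_of_div hden1 hden2 (edwards_add_mem_cleared a d h1 h2)

/-- the Edwards sum of two points on a twisted Edwards curve lies on the curve. -/
theorem edwards_add_closed {k : Type*} [Field k] (a d x1 y1 x2 y2 : k)
    (hchar : (2 : k) ≠ 0) (ha : a ≠ 0) (hd : d ≠ 0) (had : a ≠ d)
    (h1 : a * x1 ^ 2 + y1 ^ 2 = 1 + d * x1 ^ 2 * y1 ^ 2)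
    (h2 : a * x2 ^ 2 + y2 ^ 2 = 1 + d * x2 ^ 2 * y2 ^ 2)
    (hden1 : 1 + d * x1 * x2 * y1 * y2 ≠ 0)
    (hden2 : 1 - d * x1 * x2 * y1 * y2 ≠ 0) :
    a * ((x1 * y2 + x2 * y1) / (1 + d * x1 * x2 * y1 * y2)) ^ 2
        + ((y1 * y2 - a * x1 * x2) / (1 - d * x1 * x2 * y1 * y2)) ^ 2
      = 1 + d * ((x1 * y2 + x2 * y1) / (1 + d * x1 * x2 * y1 * y2)) ^ 2
          * ((y1 * y2 - a * x1 * x2) / (1 - d * x1 * x2 * y1 * y2)) ^ 2 :=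
  edwards_add_closed_general a d x1 y1 x2 y2 h1 h2 hden1 hden2
end

section
/- If (x,y) is a point on the twisted Edwards curve ax² + y² = 1 + dx²y² with x(1−y) ≠ 0, then the point (u,v) with u = ((5a−d)+(a−5d)y)/(12(1−y)) and v = (a−d)(1+y)/(4x(1−y)) satisfies the Weierstrass equation v² = u³ − ((a²+14ad+d²)/48)u − ((a³−33a²d−33ad²+d³)/864). -/
/-! The Weierstrass cubic has the rational root `e = (a + d) / 6`, the image of the point `(0, -1)`
of order two. Writing `(u, v)` for the image of `(x, y)`, one finds `u - e = (a - d)(1 + y) / (4(1 - y))`,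
so `v = (u - e) / x`, while the complementary quadratic factor at `u` equals
`(a - d)(a - d y²) / (4(1 - y)²)`. Since the curve equation reads `x² (a - d y²) = 1 - y²`,
`x²` times the quadratic factor is `u - e`, and hence the cubic at `u` is `(u - e)² / x² = v²`. -/

section

variable {k : Type*} [Field k]

theorem ne_zero_of_eq_two_pow_mul_three_pow (h2 : (2 : k) ≠ 0) (h3 : (3 : k) ≠ 0) {n : k}
    (i j : ℕ) (hn : n = 2 ^ i * 3 ^ j) : n ≠ 0 :=
  hn ▸ mul_ne_zero (pow_ne_zero i h2) (pow_ne_zero j h3)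

theorem weierstrass_cubic_eq_mul (h2 : (2 : k) ≠ 0) (h3 : (3 : k) ≠ 0) (a d u : k) :
    u ^ 3 - (a ^ 2 + 14 * a * d + d ^ 2) / 48 * u
        - (a ^ 3 - 33 * a ^ 2 * d - 33 * a * d ^ 2 + d ^ 3) / 864
      = (u - (a + d) / 6) * (u ^ 2 + (a + d) / 6 * u + (a ^ 2 - 34 * a * d + d ^ 2) / 144) := by
  have := ne_zero_of_eq_two_pow_mul_three_pow h2 h3 (n := 6) 1 1 (by norm_num)
  have := ne_zero_of_eq_two_pow_mul_three_pow h2 h3 (n := 48) 4 1 (by norm_num)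
  have := ne_zero_of_eq_two_pow_mul_three_pow h2 h3 (n := 144) 4 2 (by norm_num)
  have := ne_zero_of_eq_two_pow_mul_three_pow h2 h3 (n := 864) 5 3 (by norm_num)
  field_simp
  ring

theorem edwards_u_sub_root (h2 : (2 : k) ≠ 0) (h3 : (3 : k) ≠ 0) {a d y : k} (hy : 1 - y ≠ 0) :
    ((5 * a - d) + (a - 5 * d) * y) / (12 * (1 - y)) - (a + d) / 6
      = (a - d) * (1 + y) / (4 * (1 - y)) := by
  have := ne_zero_of_eq_two_pow_mul_three_pow h2 h3 (n := 4) 2 0 (by norm_num)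
  have := ne_zero_of_eq_two_pow_mul_three_pow h2 h3 (n := 6) 1 1 (by norm_num)
  have := ne_zero_of_eq_two_pow_mul_three_pow h2 h3 (n := 12) 2 1 (by norm_num)
  field_simp
  ring

theorem edwards_u_quadratic_factor (h2 : (2 : k) ≠ 0) (h3 : (3 : k) ≠ 0) {a d y : k}
    (hy : 1 - y ≠ 0) :
    (((5 * a - d) + (a - 5 * d) * y) / (12 * (1 - y))) ^ 2
        + (a + d) / 6 * (((5 * a - d) + (a - 5 * d) * y) / (12 * (1 - y)))
        + (a ^ 2 - 34 * a * d + d ^ 2) / 144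
      = (a - d) * (a - d * y ^ 2) / (4 * (1 - y) ^ 2) := by
  have := ne_zero_of_eq_two_pow_mul_three_pow h2 h3 (n := 4) 2 0 (by norm_num)
  have := ne_zero_of_eq_two_pow_mul_three_pow h2 h3 (n := 6) 1 1 (by norm_num)
  have := ne_zero_of_eq_two_pow_mul_three_pow h2 h3 (n := 12) 2 1 (by norm_num)
  have := ne_zero_of_eq_two_pow_mul_three_pow h2 h3 (n := 144) 4 2 (by norm_num)
  field_simp
  ring

end

theorem edwards_to_weierstrass_general {k : Type*} [Field k] (a d x y : k)
    (h2 : (2 : k) ≠ 0) (h3 : (3 : k) ≠ 0)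
    (hE : a * x ^ 2 + y ^ 2 = 1 + d * x ^ 2 * y ^ 2)
    (hxy : x * (1 - y) ≠ 0) :
    (((a - d) * (1 + y)) / (4 * x * (1 - y))) ^ 2
      = (((5 * a - d) + (a - 5 * d) * y) / (12 * (1 - y))) ^ 3
        - ((a ^ 2 + 14 * a * d + d ^ 2) / 48)
            * (((5 * a - d) + (a - 5 * d) * y) / (12 * (1 - y)))
        - ((a ^ 3 - 33 * a ^ 2 * d - 33 * a * d ^ 2 + d ^ 3) / 864) := by
  obtain ⟨hx, hy⟩ := mul_ne_zero_iff.mp hxy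
  have h4 := ne_zero_of_eq_two_pow_mul_three_pow h2 h3 (n := 4) 2 0 (by norm_num)
  have hcurve : x ^ 2 * ((a - d) * (a - d * y ^ 2) / (4 * (1 - y) ^ 2))
      = (a - d) * (1 + y) / (4 * (1 - y)) := by
    field_simp
    linear_combination (a - d) * hE
  rw [weierstrass_cubic_eq_mul h2 h3, edwards_u_sub_root h2 h3 hy,
    edwards_u_quadratic_factor h2 h3 hy]
  calc (((a - d) * (1 + y)) / (4 * x * (1 - y))) ^ 2
      = ((a - d) * (1 + y) / (4 * (1 - y)) / x) ^ 2 := by rw [mul_right_comm 4 x, div_div]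
    _ = (a - d) * (1 + y) / (4 * (1 - y)) * ((a - d) * (1 + y) / (4 * (1 - y)) / x ^ 2) := by
      ring
    _ = _ := by rw [← hcurve, mul_div_cancel_left₀ _ (pow_ne_zero 2 hx)]

/-- the birational map sends points of the twisted Edwards curve to
points of the associated Weierstrass curve. -/
theorem edwards_to_weierstrass {k : Type*} [Field k] (a d x y : k)
    (h2 : (2 : k) ≠ 0) (h3 : (3 : k) ≠ 0)
    (ha : a ≠ 0) (hd : d ≠ 0) (had : a ≠ d)
    (hE : a * x ^ 2 + y ^ 2 = 1 + d * x ^ 2 * y ^ 2)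
    (hxy : x * (1 - y) ≠ 0) :
    (((a - d) * (1 + y)) / (4 * x * (1 - y))) ^ 2
      = (((5 * a - d) + (a - 5 * d) * y) / (12 * (1 - y))) ^ 3
        - ((a ^ 2 + 14 * a * d + d ^ 2) / 48)
            * (((5 * a - d) + (a - 5 * d) * y) / (12 * (1 - y)))
        - ((a ^ 3 - 33 * a ^ 2 * d - 33 * a * d ^ 2 + d ^ 3) / 864) :=
  edwards_to_weierstrass_general a d x y h2 h3 hE hxy
end

section
/- If (u,v) satisfies v² = u³ + Au + B with A = −(a²+14ad+d²)/48 and B = −(a³−33a²d−33ad²+d³)/864, and v(12u + a − 5d) ≠ 0, then the point (x,y) with x = (6u−(a+d))/(6v) and y = (12u+d−5a)/(12u+a−5d) satisfies ax² + y² = 1 + dx²y². -/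
/-!
After clearing denominators, the difference of the two sides of the Edwards equation is
`(d - a) (6u - (a + d))` times the cleared Weierstrass equation.
-/

lemma edwards_div_eq_iff {k : Type*} [Field k] {a d p q r s : k} (hq : q ≠ 0) (hs : s ≠ 0) :
    a * (p / q) ^ 2 + (r / s) ^ 2 = 1 + d * (p / q) ^ 2 * (r / s) ^ 2 ↔
      a * p ^ 2 * s ^ 2 + r ^ 2 * q ^ 2 = q ^ 2 * s ^ 2 + d * p ^ 2 * r ^ 2 := by
  field_simp

lemma edwards_cleared_of_weierstrass_cleared {R : Type*} [CommRing R] {a d u v : R}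
    (hW : 864 * v ^ 2 = 864 * u ^ 3 - 18 * (a ^ 2 + 14 * a * d + d ^ 2) * u
        - (a ^ 3 - 33 * a ^ 2 * d - 33 * a * d ^ 2 + d ^ 3)) :
    a * (6 * u - (a + d)) ^ 2 * (12 * u + a - 5 * d) ^ 2 + (12 * u + d - 5 * a) ^ 2 * (6 * v) ^ 2
      = (6 * v) ^ 2 * (12 * u + a - 5 * d) ^ 2
        + d * (6 * u - (a + d)) ^ 2 * (12 * u + d - 5 * a) ^ 2 := by
  linear_combination (d - a) * (6 * u - (a + d)) * hW

theorem weierstrass_to_edwards_general {k : Type*} [Field k] (a d u v : k)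
    (h2 : (2 : k) ≠ 0) (h3 : (3 : k) ≠ 0)
    (hW : v ^ 2 = u ^ 3 - ((a ^ 2 + 14 * a * d + d ^ 2) / 48) * u
        - ((a ^ 3 - 33 * a ^ 2 * d - 33 * a * d ^ 2 + d ^ 3) / 864))
    (hden : v * (12 * u + a - 5 * d) ≠ 0) :
    a * ((6 * u - (a + d)) / (6 * v)) ^ 2
        + ((12 * u + d - 5 * a) / (12 * u + a - 5 * d)) ^ 2
      = 1 + d * ((6 * u - (a + d)) / (6 * v)) ^ 2
          * ((12 * u + d - 5 * a) / (12 * u + a - 5 * d)) ^ 2 := by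
  obtain ⟨hv, hq⟩ := mul_ne_zero_iff.mp hden
  have h6 : (6 : k) ≠ 0 := by
    rw [show (6 : k) = 2 * 3 by norm_num]; exact mul_ne_zero h2 h3
  have h48 : (48 : k) ≠ 0 := by
    rw [show (48 : k) = 2 ^ 4 * 3 by norm_num]; exact mul_ne_zero (pow_ne_zero _ h2) h3
  have h864 : (864 : k) ≠ 0 := by
    rw [show (864 : k) = 2 ^ 5 * 3 ^ 3 by norm_num]
    exact mul_ne_zero (pow_ne_zero _ h2) (pow_ne_zero _ h3)
  have hW' : 864 * v ^ 2 = 864 * u ^ 3 - 18 * (a ^ 2 + 14 * a * d + d ^ 2) * u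
      - (a ^ 3 - 33 * a ^ 2 * d - 33 * a * d ^ 2 + d ^ 3) := by
    rw [hW]; field_simp; ring
  rw [edwards_div_eq_iff (mul_ne_zero h6 hv) hq]
  exact edwards_cleared_of_weierstrass_cleared hW'

/-- the inverse birational map sends points of the Weierstrass curve
to points of the twisted Edwards curve. -/
theorem weierstrass_to_edwards {k : Type*} [Field k] (a d u v : k)
    (h2 : (2 : k) ≠ 0) (h3 : (3 : k) ≠ 0)
    (ha : a ≠ 0) (hd : d ≠ 0) (had : a ≠ d)
    (hW : v ^ 2 = u ^ 3 - ((a ^ 2 + 14 * a * d + d ^ 2) / 48) * u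
        - ((a ^ 3 - 33 * a ^ 2 * d - 33 * a * d ^ 2 + d ^ 3) / 864))
    (hden : v * (12 * u + a - 5 * d) ≠ 0) :
    a * ((6 * u - (a + d)) / (6 * v)) ^ 2
        + ((12 * u + d - 5 * a) / (12 * u + a - 5 * d)) ^ 2
      = 1 + d * ((6 * u - (a + d)) / (6 * v)) ^ 2
          * ((12 * u + d - 5 * a) / (12 * u + a - 5 * d)) ^ 2 :=
  weierstrass_to_edwards_general a d u v h2 h3 hW hden
end

section
/- The maps (x,y) ↦ (((5a−d)+(a−5d)y)/(12(1−y)), (a−d)(1+y)/(4x(1−y))) and (u,v) ↦ ((6u−(a+d))/(6v), (12u+d−5a)/(12u+a−5d)) are mutually inverse on points where both are defined: applying the first map to a point (x,y) on E with x(1−y) ≠ 0 and then the second map (assuming its denominators are nonzero) recovers (x,y). -/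
/-! The two maps are inverse birational maps of the plane, not only of the curves: after
clearing denominators, `6u - (a + d) = 3(a - d)(1 + y) / (2(1 - y))`, `6v` differs from this by the
factor `1 / x`, and `12u + d - 5a`, `12u + a - 5d` are
`6(a - d)/(1 - y)` times `y` and `1`. -/

section

variable {k : Type*} [Field k]

def edwardsToWeierstrass (a d : k) (p : k × k) : k × k :=
  (((5 * a - d) + (a - 5 * d) * p.2) / (12 * (1 - p.2)),
    ((a - d) * (1 + p.2)) / (4 * p.1 * (1 - p.2)))

def weierstrassToEdwards (a d : k) (q : k × k) : k × k :=
  ((6 * q.1 - (a + d)) / (6 * q.2), (12 * q.1 + d - 5 * a) / (12 * q.1 + a - 5 * d))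

theorem weierstrassToEdwards_edwardsToWeierstrass {a d : k} {p : k × k} (h3 : (3 : k) ≠ 0)
    (hv : (edwardsToWeierstrass a d p).2 ≠ 0)
    (hden : 12 * (edwardsToWeierstrass a d p).1 + a - 5 * d ≠ 0) :
    weierstrassToEdwards a d (edwardsToWeierstrass a d p) = p := by
  obtain ⟨x, y⟩ := p
  simp only [edwardsToWeierstrass, weierstrassToEdwards, Prod.mk.injEq] at hv hden ⊢
  -- Since `t / 0 = 0`, `v ≠ 0` forces every factor of `v`'s numerator and denominator to be nonzero.
  obtain ⟨hnum, hdenom⟩ := div_ne_zero_iff.mp hv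
  obtain ⟨had, hy⟩ := mul_ne_zero_iff.mp hnum
  obtain ⟨h4x, h1y⟩ := mul_ne_zero_iff.mp hdenom
  obtain ⟨h4, hx⟩ := mul_ne_zero_iff.mp h4x
  have h2 : (2 : k) ≠ 0 := fun h ↦ h4 (by linear_combination 2 * h)
  have h6 : (6 : k) ≠ 0 := by simpa only [show (2 : k) * 3 = 6 by norm_num] using mul_ne_zero h2 h3
  have h12 : (12 : k) ≠ 0 := by simpa only [show (4 : k) * 3 = 12 by norm_num] using mul_ne_zero h4 h3
  constructor
  · field_simp
    ring
  · rw [div_eq_iff hden]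
    field_simp
    ring

end

theorem edwards_weierstrass_inverse_general {k : Type*} [Field k] (a d x y : k)
    (h3 : (3 : k) ≠ 0)
    (u v : k)
    (hu : u = ((5 * a - d) + (a - 5 * d) * y) / (12 * (1 - y)))
    (hv : v = ((a - d) * (1 + y)) / (4 * x * (1 - y)))
    (hv0 : v ≠ 0) (hden : 12 * u + a - 5 * d ≠ 0) :
    (6 * u - (a + d)) / (6 * v) = x ∧
    (12 * u + d - 5 * a) / (12 * u + a - 5 * d) = y := by
  subst hu hv
  exact Prod.ext_iff.mp (weierstrassToEdwards_edwardsToWeierstrass (p := (x, y)) h3 hv0 hden)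

/-- the two birational maps between the twisted Edwards curve and
the Weierstrass curve are mutually inverse where defined. -/
theorem edwards_weierstrass_inverse {k : Type*} [Field k] (a d x y : k)
    (h2 : (2 : k) ≠ 0) (h3 : (3 : k) ≠ 0)
    (ha : a ≠ 0) (hd : d ≠ 0) (had : a ≠ d)
    (hE : a * x ^ 2 + y ^ 2 = 1 + d * x ^ 2 * y ^ 2)
    (hxy : x * (1 - y) ≠ 0)
    (u v : k)
    (hu : u = ((5 * a - d) + (a - 5 * d) * y) / (12 * (1 - y)))
    (hv : v = ((a - d) * (1 + y)) / (4 * x * (1 - y)))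
    (hv0 : v ≠ 0) (hden : 12 * u + a - 5 * d ≠ 0) :
    (6 * u - (a + d)) / (6 * v) = x ∧
    (12 * u + d - 5 * a) / (12 * u + a - 5 * d) = y :=
  edwards_weierstrass_inverse_general a d x y h3 u v hu hv hv0 hden
end

section
/- Let (x1,y1), (x2,y2) be points on ax² + y² = 1 + dx²y² with 1 − a d x1² x2² ≠ 0 and all addition-law denominators nonzero. Then the x-coordinate of the Edwards sum satisfies x₊ = (x1 y2 (1 − d x2²) + x2 y1 (1 − d x1²)) / (1 − a d x1² x2²). -/
theorem edwards_xadd_general {k : Type*} [Field k] (a d x1 y1 x2 y2 : k)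
    (h1 : a * x1 ^ 2 + y1 ^ 2 = 1 + d * x1 ^ 2 * y1 ^ 2)
    (h2 : a * x2 ^ 2 + y2 ^ 2 = 1 + d * x2 ^ 2 * y2 ^ 2)
    (hden1 : 1 + d * x1 * x2 * y1 * y2 ≠ 0)
    (hden2 : 1 - a * d * x1 ^ 2 * x2 ^ 2 ≠ 0) :
    (x1 * y2 + x2 * y1) / (1 + d * x1 * x2 * y1 * y2)
      = (x1 * y2 * (1 - d * x2 ^ 2) + x2 * y1 * (1 - d * x1 ^ 2))
          / (1 - a * d * x1 ^ 2 * x2 ^ 2) := by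
  rw [div_eq_div_iff hden1 hden2]
  linear_combination (-(d * x1 * x2 ^ 2 * y2)) * h1 + (-(d * x1 ^ 2 * x2 * y1)) * h2

/-- Theorem xadd: alternative formula for the x-coordinate of the
Edwards sum. -/
theorem edwards_xadd {k : Type*} [Field k] (a d x1 y1 x2 y2 : k)
    (hchar : (2 : k) ≠ 0) (ha : a ≠ 0) (hd : d ≠ 0) (had : a ≠ d)
    (h1 : a * x1 ^ 2 + y1 ^ 2 = 1 + d * x1 ^ 2 * y1 ^ 2)
    (h2 : a * x2 ^ 2 + y2 ^ 2 = 1 + d * x2 ^ 2 * y2 ^ 2)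
    (hden1 : 1 + d * x1 * x2 * y1 * y2 ≠ 0)
    (hden2 : 1 - a * d * x1 ^ 2 * x2 ^ 2 ≠ 0) :
    (x1 * y2 + x2 * y1) / (1 + d * x1 * x2 * y1 * y2)
      = (x1 * y2 * (1 - d * x2 ^ 2) + x2 * y1 * (1 - d * x1 ^ 2))
          / (1 - a * d * x1 ^ 2 * x2 ^ 2) :=
  edwards_xadd_general a d x1 y1 x2 y2 h1 h2 hden1 hden2
end

section
/- Let (x1,y1), (x2,y2) be points on ax² + y² = 1 + dx²y² with all relevant denominators nonzero. Then the y-coordinate of the Edwards sum satisfies y₊ = ((a−d) y1 y2 − (a − d y1²)(a − d y2²) x1 x2) / (a − d(y1² + y2²) + d y1² y2²). -/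
/-! The curve equation says `(a - d y²) x² = 1 - y²`; this is how the factors `a - d yᵢ²` of the
alternative formula arise, and after clearing denominators the two formulas differ by
`d y₁ y₂` times a combination of the two curve equations. -/

theorem edwards_yadd_cross_mul {R : Type*} [CommRing R] {a d x1 y1 x2 y2 : R}
    (h1 : a * x1 ^ 2 + y1 ^ 2 = 1 + d * x1 ^ 2 * y1 ^ 2)
    (h2 : a * x2 ^ 2 + y2 ^ 2 = 1 + d * x2 ^ 2 * y2 ^ 2) :
    (y1 * y2 - a * x1 * x2) * (a - d * (y1 ^ 2 + y2 ^ 2) + d * y1 ^ 2 * y2 ^ 2)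
      = ((a - d) * y1 * y2 - (a - d * y1 ^ 2) * (a - d * y2 ^ 2) * x1 * x2)
          * (1 - d * x1 * x2 * y1 * y2) := by
  linear_combination
    d * y1 * y2 * ((y1 ^ 2 - 1) * h2 - (a - d * y2 ^ 2) * x2 ^ 2 * h1)

theorem edwards_yadd_general {k : Type*} [Field k] (a d x1 y1 x2 y2 : k)
    (h1 : a * x1 ^ 2 + y1 ^ 2 = 1 + d * x1 ^ 2 * y1 ^ 2)
    (h2 : a * x2 ^ 2 + y2 ^ 2 = 1 + d * x2 ^ 2 * y2 ^ 2)
    (hden1 : 1 - d * x1 * x2 * y1 * y2 ≠ 0)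
    (hden2 : a - d * (y1 ^ 2 + y2 ^ 2) + d * y1 ^ 2 * y2 ^ 2 ≠ 0) :
    (y1 * y2 - a * x1 * x2) / (1 - d * x1 * x2 * y1 * y2)
      = ((a - d) * y1 * y2 - (a - d * y1 ^ 2) * (a - d * y2 ^ 2) * x1 * x2)
          / (a - d * (y1 ^ 2 + y2 ^ 2) + d * y1 ^ 2 * y2 ^ 2) :=
  (div_eq_div_iff hden1 hden2).mpr (edwards_yadd_cross_mul h1 h2)

/-- alternative formula for the y-coordinate of the Edwards sum. -/
theorem edwards_yadd {k : Type*} [Field k] (a d x1 y1 x2 y2 : k)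
    (hchar : (2 : k) ≠ 0) (ha : a ≠ 0) (hd : d ≠ 0) (had : a ≠ d)
    (h1 : a * x1 ^ 2 + y1 ^ 2 = 1 + d * x1 ^ 2 * y1 ^ 2)
    (h2 : a * x2 ^ 2 + y2 ^ 2 = 1 + d * x2 ^ 2 * y2 ^ 2)
    (hden1 : 1 - d * x1 * x2 * y1 * y2 ≠ 0)
    (hden2 : a - d * (y1 ^ 2 + y2 ^ 2) + d * y1 ^ 2 * y2 ^ 2 ≠ 0) :
    (y1 * y2 - a * x1 * x2) / (1 - d * x1 * x2 * y1 * y2)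
      = ((a - d) * y1 * y2 - (a - d * y1 ^ 2) * (a - d * y2 ^ 2) * x1 * x2)
          / (a - d * (y1 ^ 2 + y2 ^ 2) + d * y1 ^ 2 * y2 ^ 2) :=
  edwards_yadd_general a d x1 y1 x2 y2 h1 h2 hden1 hden2
end

section
/- Let (x1,y1), (x2,y2) be points on ax² + y² = 1 + dx²y² with all relevant denominators nonzero, and let x₊ and x₋ be the x-coordinates of (x1,y1)+(x2,y2) and (x1,y1)−(x2,y2) respectively (where −(x2,y2) = (−x2,y2)). Then x₊ + x₋ = 2 x1 y2 (1 − d x2²) / (1 − a d x1² x2²). -/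
/-!
With `D = d x1 x2 y1 y2`, the two fractions add up over the common denominator `(1 + D)(1 - D)`
to `2 x1 y2 (1 - d x2² y1²) / (1 - D²)`. The curve equations of both points give the identity
`(1 - d x2² y1²)(1 - a d x1² x2²) = (1 - d x2²)(1 - D²)`, which turns this into the claimed form.
-/

theorem edwards_addX_add_subX {k : Type*} [Field k] (d x1 y1 x2 y2 : k)
    (hden1 : 1 + d * x1 * x2 * y1 * y2 ≠ 0) (hden2 : 1 - d * x1 * x2 * y1 * y2 ≠ 0) :
    (x1 * y2 + x2 * y1) / (1 + d * x1 * x2 * y1 * y2)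
        + (x1 * y2 + -x2 * y1) / (1 + d * x1 * (-x2) * y1 * y2)
      = 2 * x1 * y2 * (1 - d * x2 ^ 2 * y1 ^ 2)
          / ((1 + d * x1 * x2 * y1 * y2) * (1 - d * x1 * x2 * y1 * y2)) := by
  have hneg : 1 + d * x1 * (-x2) * y1 * y2 = 1 - d * x1 * x2 * y1 * y2 := by ring
  rw [hneg, div_add_div _ _ hden1 hden2]
  ring

theorem edwards_denominator_identity {k : Type*} [CommRing k] (a d x1 y1 x2 y2 : k)
    (h1 : a * x1 ^ 2 + y1 ^ 2 = 1 + d * x1 ^ 2 * y1 ^ 2)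
    (h2 : a * x2 ^ 2 + y2 ^ 2 = 1 + d * x2 ^ 2 * y2 ^ 2) :
    (1 - d * x2 ^ 2 * y1 ^ 2) * (1 - a * d * x1 ^ 2 * x2 ^ 2)
      = (1 - d * x2 ^ 2) * ((1 + d * x1 * x2 * y1 * y2) * (1 - d * x1 * x2 * y1 * y2)) := by
  linear_combination (-d * x2 ^ 2) * h1 + (d ^ 2 * x1 ^ 2 * x2 ^ 2 * y1 ^ 2) * h2

theorem edwards_xplus_xminus_general {k : Type*} [Field k] (a d x1 y1 x2 y2 : k)
    (h1 : a * x1 ^ 2 + y1 ^ 2 = 1 + d * x1 ^ 2 * y1 ^ 2)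
    (h2 : a * x2 ^ 2 + y2 ^ 2 = 1 + d * x2 ^ 2 * y2 ^ 2)
    (hden1 : 1 + d * x1 * x2 * y1 * y2 ≠ 0)
    (hden2 : 1 - d * x1 * x2 * y1 * y2 ≠ 0)
    (hden3 : 1 - a * d * x1 ^ 2 * x2 ^ 2 ≠ 0) :
    (x1 * y2 + x2 * y1) / (1 + d * x1 * x2 * y1 * y2)
        + (x1 * y2 + -x2 * y1) / (1 + d * x1 * (-x2) * y1 * y2)
      = 2 * x1 * y2 * (1 - d * x2 ^ 2) / (1 - a * d * x1 ^ 2 * x2 ^ 2) := by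
  rw [edwards_addX_add_subX d x1 y1 x2 y2 hden1 hden2,
    div_eq_div_iff (mul_ne_zero hden1 hden2) hden3]
  linear_combination 2 * x1 * y2 * edwards_denominator_identity a d x1 y1 x2 y2 h1 h2

/-- Theorem xplusmin: x₊ + x₋ = 2x₁y₂(1 − dx₂²)/(1 − adx₁²x₂²). -/
theorem edwards_xplus_xminus {k : Type*} [Field k] (a d x1 y1 x2 y2 : k)
    (hchar : (2 : k) ≠ 0) (ha : a ≠ 0) (hd : d ≠ 0) (had : a ≠ d)
    (h1 : a * x1 ^ 2 + y1 ^ 2 = 1 + d * x1 ^ 2 * y1 ^ 2)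
    (h2 : a * x2 ^ 2 + y2 ^ 2 = 1 + d * x2 ^ 2 * y2 ^ 2)
    (hden1 : 1 + d * x1 * x2 * y1 * y2 ≠ 0)
    (hden2 : 1 - d * x1 * x2 * y1 * y2 ≠ 0)
    (hden3 : 1 - a * d * x1 ^ 2 * x2 ^ 2 ≠ 0) :
    (x1 * y2 + x2 * y1) / (1 + d * x1 * x2 * y1 * y2)
        + (x1 * y2 + -x2 * y1) / (1 + d * x1 * (-x2) * y1 * y2)
      = 2 * x1 * y2 * (1 - d * x2 ^ 2) / (1 - a * d * x1 ^ 2 * x2 ^ 2) :=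
  edwards_xplus_xminus_general a d x1 y1 x2 y2 h1 h2 hden1 hden2 hden3
end

section
/- Let (x1,y1), (x2,y2) be points on ax² + y² = 1 + dx²y² with all relevant denominators nonzero, and let y₊, y₋ be the y-coordinates of (x1,y1)+(x2,y2) and (x1,y1)−(x2,y2). Then y₊ + y₋ = 2(a−d) y1 y2 / (a − d(y1² + y2²) + d y1² y2²). -/
/-! Over the common denominator `(1 - D)(1 + D)`, `D = d x₁x₂y₁y₂`, the sum y₊ + y₋ is
`2 y₁y₂ (1 - a d x₁²x₂²) / ((1 - D)(1 + D))` in any field. On the curve,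
`x²(a - d y²) = 1 - y²`, which gives
`(1 - a d x₁²x₂²)(a - d(y₁² + y₂²) + d y₁²y₂²) = (a - d)(1 - D)(1 + D)`. -/

namespace Edwards

variable {k : Type*} [Field k]

def addY (a d x1 y1 x2 y2 : k) : k :=
  (y1 * y2 - a * x1 * x2) / (1 - d * x1 * x2 * y1 * y2)

theorem addY_add_addY_neg (a d x1 y1 x2 y2 : k)
    (hden1 : 1 - d * x1 * x2 * y1 * y2 ≠ 0) (hden2 : 1 + d * x1 * x2 * y1 * y2 ≠ 0) :
    addY a d x1 y1 x2 y2 + addY a d x1 y1 (-x2) y2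
      = 2 * y1 * y2 * (1 - a * d * x1 ^ 2 * x2 ^ 2)
          / ((1 - d * x1 * x2 * y1 * y2) * (1 + d * x1 * x2 * y1 * y2)) := by
  have hden2' : 1 - d * x1 * (-x2) * y1 * y2 = 1 + d * x1 * x2 * y1 * y2 := by ring
  rw [addY, addY, hden2', div_add_div _ _ hden1 hden2]
  ring

theorem mul_denom_eq_of_onCurve {a d x1 y1 x2 y2 : k}
    (h1 : a * x1 ^ 2 + y1 ^ 2 = 1 + d * x1 ^ 2 * y1 ^ 2)
    (h2 : a * x2 ^ 2 + y2 ^ 2 = 1 + d * x2 ^ 2 * y2 ^ 2) :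
    (1 - a * d * x1 ^ 2 * x2 ^ 2) * (a - d * (y1 ^ 2 + y2 ^ 2) + d * y1 ^ 2 * y2 ^ 2)
      = (a - d) * ((1 - d * x1 * x2 * y1 * y2) * (1 + d * x1 * x2 * y1 * y2)) := by
  linear_combination (-d * x2 ^ 2 * (a - d * y2 ^ 2)) * h1 + (-d * (1 - y1 ^ 2)) * h2

end Edwards

theorem edwards_yplus_yminus_general {k : Type*} [Field k] (a d x1 y1 x2 y2 : k)
    (h1 : a * x1 ^ 2 + y1 ^ 2 = 1 + d * x1 ^ 2 * y1 ^ 2)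
    (h2 : a * x2 ^ 2 + y2 ^ 2 = 1 + d * x2 ^ 2 * y2 ^ 2)
    (hden1 : 1 - d * x1 * x2 * y1 * y2 ≠ 0)
    (hden2 : 1 + d * x1 * x2 * y1 * y2 ≠ 0)
    (hden3 : a - d * (y1 ^ 2 + y2 ^ 2) + d * y1 ^ 2 * y2 ^ 2 ≠ 0) :
    (y1 * y2 - a * x1 * x2) / (1 - d * x1 * x2 * y1 * y2)
        + (y1 * y2 - a * x1 * (-x2)) / (1 - d * x1 * (-x2) * y1 * y2)
      = 2 * (a - d) * y1 * y2
          / (a - d * (y1 ^ 2 + y2 ^ 2) + d * y1 ^ 2 * y2 ^ 2) := by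
  change Edwards.addY a d x1 y1 x2 y2 + Edwards.addY a d x1 y1 (-x2) y2 = _
  rw [Edwards.addY_add_addY_neg a d x1 y1 x2 y2 hden1 hden2,
    div_eq_div_iff (mul_ne_zero hden1 hden2) hden3]
  linear_combination (2 * y1 * y2) * Edwards.mul_denom_eq_of_onCurve h1 h2

/-- Theorem yplusmin: y₊ + y₋ = 2(a−d)y₁y₂/(a − d(y₁²+y₂²) + dy₁²y₂²). -/
theorem edwards_yplus_yminus {k : Type*} [Field k] (a d x1 y1 x2 y2 : k)
    (hchar : (2 : k) ≠ 0) (ha : a ≠ 0) (hd : d ≠ 0) (had : a ≠ d)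
    (h1 : a * x1 ^ 2 + y1 ^ 2 = 1 + d * x1 ^ 2 * y1 ^ 2)
    (h2 : a * x2 ^ 2 + y2 ^ 2 = 1 + d * x2 ^ 2 * y2 ^ 2)
    (hden1 : 1 - d * x1 * x2 * y1 * y2 ≠ 0)
    (hden2 : 1 + d * x1 * x2 * y1 * y2 ≠ 0)
    (hden3 : a - d * (y1 ^ 2 + y2 ^ 2) + d * y1 ^ 2 * y2 ^ 2 ≠ 0) :
    (y1 * y2 - a * x1 * x2) / (1 - d * x1 * x2 * y1 * y2)
        + (y1 * y2 - a * x1 * (-x2)) / (1 - d * x1 * (-x2) * y1 * y2)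
      = 2 * (a - d) * y1 * y2
          / (a - d * (y1 ^ 2 + y2 ^ 2) + d * y1 ^ 2 * y2 ^ 2) :=
  edwards_yplus_yminus_general a d x1 y1 x2 y2 h1 h2 hden1 hden2 hden3
end

section
/- For every n ≥ 1, the twisted Edwards division polynomial ψ̃ₙ(y) lies in ℤ[a,d,y]; moreover if n is even then (y+1) divides ψ̃ₙ(y). -/
/-!
Work in the subring `S` of the fraction field that is the image of `ℤ[a,d,y]`, and prove by strong
induction that `ψ̃ₙ ∈ S`, with moreover `ψ̃ₙ / (y+1) ∈ S` for even `n`. In every recursion the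
indices `r - 2, …, r + 2` have alternating parity, and the factors `(y+1)` carried by the even-indexed
terms are exactly enough to absorb the denominators `(y+1)` and `(y+1)²`, leaving one factor `(y+1)`
over when the new index is even.
-/

open MvPolynomial

section SubringArithmetic

variable {K : Type*} [Field K] {S : Subring K} {t : K}

theorem mem_of_div_mem (ht : t ∈ S) (ht0 : t ≠ 0) {x : K} (hx : x / t ∈ S) : x ∈ S := by
  simpa [mul_div_cancel₀ x ht0] using mul_mem ht hx

theorem mul_pow_three_div_sq_mem (ht : t ∈ S) {c u : K} (hc : c ∈ S) (hu : u / t ∈ S) :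
    c * u ^ 3 / t ^ 2 ∈ S := by
  rcases eq_or_ne t 0 with rfl | ht0
  · simp
  have h : c * u ^ 3 / t ^ 2 = c * t * (u / t) ^ 3 := by field_simp
  exact h ▸ mul_mem (mul_mem hc ht) (pow_mem hu 3)

theorem div_mul_sub_div_mem_of_factors_div_mem {u v w z s : K} (hu : u / t ∈ S) (hv : v / t ∈ S)
    (hw : w ∈ S) (hz : z / t ∈ S) (hs : s ∈ S) : u / t * (v * w ^ 2 - z * s ^ 2) / t ∈ S := by
  have h : u / t * (v * w ^ 2 - z * s ^ 2) / t = u / t * (v / t * w ^ 2 - z / t * s ^ 2) := by ring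
  rw [h]
  apply_rules [pow_mem, mul_mem, sub_mem]

theorem div_mul_sub_div_mem_of_squared_div_mem {u v w z s : K} (hu : u ∈ S) (hv : v ∈ S)
    (hw : w / t ∈ S) (hz : z ∈ S) (hs : s / t ∈ S) : u / t * (v * w ^ 2 - z * s ^ 2) / t ∈ S := by
  have h : u / t * (v * w ^ 2 - z * s ^ 2) / t = u * (v * (w / t) ^ 2 - z * (s / t) ^ 2) := by ring
  rw [h]
  apply_rules [pow_mem, mul_mem, sub_mem]

end SubringArithmetic

theorem dvd_of_div_mem_range {R K : Type*} [CommRing R] [Field K] [Algebra R K]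
    [IsFractionRing R K] {p t : R} (ht : t ≠ 0)
    (h : algebraMap R K p / algebraMap R K t ∈ (algebraMap R K).range) : t ∣ p := by
  obtain ⟨q, hq⟩ := h
  have ht' : algebraMap R K t ≠ 0 := (map_ne_zero_iff _ (IsFractionRing.injective R K)).mpr ht
  refine ⟨q, IsFractionRing.injective R K ?_⟩
  rw [map_mul, hq, mul_div_cancel₀ _ ht']

theorem MvPolynomial.X_add_one_ne_zero {σ R : Type*} [CommSemiring R] [Nontrivial R] (i : σ) :
    (X i + 1 : MvPolynomial σ R) ≠ 0 := fun h => by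
  simpa using congrArg constantCoeff h

theorem edwards_division_polynomial_integral_general
    (ψ : ℕ → FractionRing (MvPolynomial (Fin 3) ℤ))
    (A D Y : FractionRing (MvPolynomial (Fin 3) ℤ))
    (hA : A = algebraMap (MvPolynomial (Fin 3) ℤ) _ (X 0))
    (hD : D = algebraMap (MvPolynomial (Fin 3) ℤ) _ (X 1))
    (hY : Y = algebraMap (MvPolynomial (Fin 3) ℤ) _ (X 2))
    (h1 : ψ 1 = 1) (h2 : ψ 2 = Y + 1)
    (h3 : ψ 3 = -D * Y ^ 4 - 2 * D * Y ^ 3 + 2 * A * Y + A)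
    (h4 : ψ 4 = -2 * D * Y ^ 6 - 2 * D * Y ^ 5 + 2 * A * Y ^ 2 + 2 * A * Y)
    (hodd0 : ∀ r, r % 4 = 0 → 4 ≤ r → ψ (2 * r + 1)
      = 4 * (A - D) * (A - D * Y ^ 2) ^ 2 * ψ (r + 2) * (ψ r) ^ 3 / (Y + 1) ^ 2
        - ψ (r - 1) * (ψ (r + 1)) ^ 3)
    (hodd1 : ∀ r, r % 4 = 1 → 5 ≤ r → ψ (2 * r + 1)
      = ψ (r + 2) * (ψ r) ^ 3
        - 4 * (A - D * Y ^ 2) ^ 2 * ψ (r - 1) * (ψ (r + 1)) ^ 3 / (Y + 1) ^ 2)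
    (hodd2 : ∀ r, r % 4 = 2 → 2 ≤ r → ψ (2 * r + 1)
      = 4 * (A - D * Y ^ 2) ^ 2 * ψ (r + 2) * (ψ r) ^ 3 / (Y + 1) ^ 2
        - ψ (r - 1) * (ψ (r + 1)) ^ 3)
    (hodd3 : ∀ r, r % 4 = 3 → 3 ≤ r → ψ (2 * r + 1)
      = ψ (r + 2) * (ψ r) ^ 3
        - 4 * (A - D) * (A - D * Y ^ 2) ^ 2 * ψ (r - 1) * (ψ (r + 1)) ^ 3 / (Y + 1) ^ 2)
    (heven0 : ∀ r, r % 4 = 0 → 4 ≤ r → ψ (2 * r)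
      = ψ r / (Y + 1) * (ψ (r + 2) * (ψ (r - 1)) ^ 2 - ψ (r - 2) * (ψ (r + 1)) ^ 2))
    (heven1 : ∀ r, r % 4 = 1 → 5 ≤ r → ψ (2 * r)
      = ψ r / (Y + 1)
          * ((A - D) * ψ (r + 2) * (ψ (r - 1)) ^ 2 - ψ (r - 2) * (ψ (r + 1)) ^ 2))
    (heven2 : ∀ r, r % 4 = 2 → 6 ≤ r → ψ (2 * r)
      = ψ r / (Y + 1) * (ψ (r + 2) * (ψ (r - 1)) ^ 2 - ψ (r - 2) * (ψ (r + 1)) ^ 2))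
    (heven3 : ∀ r, r % 4 = 3 → 3 ≤ r → ψ (2 * r)
      = ψ r / (Y + 1)
          * (ψ (r + 2) * (ψ (r - 1)) ^ 2 - (A - D) * ψ (r - 2) * (ψ (r + 1)) ^ 2)) :
    ∀ n, 1 ≤ n → ∃ p : MvPolynomial (Fin 3) ℤ,
      ψ n = algebraMap (MvPolynomial (Fin 3) ℤ) _ p ∧
      (Even n → (X 2 + 1 : MvPolynomial (Fin 3) ℤ) ∣ p) := by
  intro n hn
  let S := (algebraMap (MvPolynomial (Fin 3) ℤ) (FractionRing (MvPolynomial (Fin 3) ℤ))).range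
  have hAS : A ∈ S := hA ▸ ⟨X 0, rfl⟩
  have hDS : D ∈ S := hD ▸ ⟨X 1, rfl⟩
  have hYS : Y ∈ S := hY ▸ ⟨X 2, rfl⟩
  have hTS : Y + 1 ∈ S := add_mem hYS (one_mem S)
  have hT0 : Y + 1 ≠ 0 := fun h => X_add_one_ne_zero (R := ℤ) (2 : Fin 3)
    (IsFractionRing.injective _ (FractionRing (MvPolynomial (Fin 3) ℤ)) (by simpa [hY] using h))
  have integral : ∀ n, 1 ≤ n → ψ n ∈ S ∧ (Even n → ψ n / (Y + 1) ∈ S) := by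
    intro n
    induction n using Nat.strong_induction_on with | _ n IH => ?_
    intro hn
    have mem : ∀ m, 1 ≤ m ∧ m < n → ψ m ∈ S := fun m hm => (IH m hm.2 hm.1).1
    have ev : ∀ m, 1 ≤ m ∧ m < n ∧ m % 2 = 0 → ψ m / (Y + 1) ∈ S :=
      fun m hm => (IH m hm.2.1 hm.1).2 (Nat.even_iff.mpr hm.2.2)
    have of_div : ψ n / (Y + 1) ∈ S → ψ n ∈ S ∧ (Even n → ψ n / (Y + 1) ∈ S) :=
      fun h => ⟨mem_of_div_mem hTS hT0 h, fun _ => h⟩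
    rcases lt_or_ge n 5 with hn5 | hn5
    · interval_cases n
      · exact ⟨by rw [h1]; exact one_mem S, fun h => absurd h (by decide)⟩
      · exact of_div (by rw [h2, div_self hT0]; exact one_mem S)
      · refine ⟨?_, fun h => absurd h (by decide)⟩
        rw [h3]
        apply_rules [hAS, hDS, hYS, ofNat_mem, pow_mem, add_mem, sub_mem, mul_mem, neg_mem]
      · refine of_div ?_
        rw [h4, show -2 * D * Y ^ 6 - 2 * D * Y ^ 5 + 2 * A * Y ^ 2 + 2 * A * Y
          = (Y + 1) * (2 * Y * (A - D * Y ^ 4)) by ring, mul_div_cancel_left₀ _ hT0]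
        apply_rules [hAS, hDS, hYS, ofNat_mem, pow_mem, mul_mem, sub_mem]
    obtain ⟨r, rfl | rfl⟩ := Nat.even_or_odd' n
    · refine of_div ?_
      rcases (by omega : r % 4 = 0 ∨ r % 4 = 1 ∨ r % 4 = 2 ∨ r % 4 = 3) with h | h | h | h
      all_goals
        first
        | rw [heven0 r h (by omega)] | rw [heven1 r h (by omega)]
        | rw [heven2 r h (by omega)] | rw [heven3 r h (by omega)]
        -- `y + 1` divides `ψ̃ r` and `ψ̃ (r ± 2)` for even `r`, and `ψ̃ (r ± 1)` for odd `r`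
        first
        | apply div_mul_sub_div_mem_of_factors_div_mem <;> apply_rules [mem, ev] <;> omega
        | apply div_mul_sub_div_mem_of_squared_div_mem <;>
            apply_rules [hAS, hDS, sub_mem, mul_mem, mem, ev] <;> omega
    · refine ⟨?_, fun h => absurd h (Nat.not_even_two_mul_add_one r)⟩
      rcases (by omega : r % 4 = 0 ∨ r % 4 = 1 ∨ r % 4 = 2 ∨ r % 4 = 3) with h | h | h | h
      all_goals
        first
        | rw [hodd0 r h (by omega)] | rw [hodd1 r h (by omega)]
        | rw [hodd2 r h (by omega)] | rw [hodd3 r h (by omega)]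
        apply_rules [hAS, hDS, hYS, ofNat_mem, pow_mem, sub_mem, mul_pow_three_div_sq_mem, mul_mem,
          mem, ev] <;> omega
  obtain ⟨p, hp⟩ := (integral n hn).1
  refine ⟨p, hp.symm, fun he =>
    dvd_of_div_mem_range (K := FractionRing (MvPolynomial (Fin 3) ℤ)) (X_add_one_ne_zero 2) ?_⟩
  rw [hp, map_add, map_one, ← hY]
  exact (integral n hn).2 he

/-- Theorem int: the twisted Edwards division polynomials ψ̃ₙ,
defined by the initial values and the case-by-case recursions of Theorem 7.1
inside the fraction field of ℤ[a,d,y], lie in ℤ[a,d,y] for all n ≥ 1, and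
(y+1) divides ψ̃ₙ when n is even.  Here `X 0 = a`, `X 1 = d`, `X 2 = y`. -/
theorem edwards_division_polynomial_integral
    (ψ : ℕ → FractionRing (MvPolynomial (Fin 3) ℤ))
    (A D Y : FractionRing (MvPolynomial (Fin 3) ℤ))
    (hA : A = algebraMap (MvPolynomial (Fin 3) ℤ) _ (X 0))
    (hD : D = algebraMap (MvPolynomial (Fin 3) ℤ) _ (X 1))
    (hY : Y = algebraMap (MvPolynomial (Fin 3) ℤ) _ (X 2))
    (h0 : ψ 0 = 0) (h1 : ψ 1 = 1) (h2 : ψ 2 = Y + 1)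
    (h3 : ψ 3 = -D * Y ^ 4 - 2 * D * Y ^ 3 + 2 * A * Y + A)
    (h4 : ψ 4 = -2 * D * Y ^ 6 - 2 * D * Y ^ 5 + 2 * A * Y ^ 2 + 2 * A * Y)
    (hodd0 : ∀ r, r % 4 = 0 → 4 ≤ r → ψ (2 * r + 1)
      = 4 * (A - D) * (A - D * Y ^ 2) ^ 2 * ψ (r + 2) * (ψ r) ^ 3 / (Y + 1) ^ 2
        - ψ (r - 1) * (ψ (r + 1)) ^ 3)
    (hodd1 : ∀ r, r % 4 = 1 → 5 ≤ r → ψ (2 * r + 1)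
      = ψ (r + 2) * (ψ r) ^ 3
        - 4 * (A - D * Y ^ 2) ^ 2 * ψ (r - 1) * (ψ (r + 1)) ^ 3 / (Y + 1) ^ 2)
    (hodd2 : ∀ r, r % 4 = 2 → 2 ≤ r → ψ (2 * r + 1)
      = 4 * (A - D * Y ^ 2) ^ 2 * ψ (r + 2) * (ψ r) ^ 3 / (Y + 1) ^ 2
        - ψ (r - 1) * (ψ (r + 1)) ^ 3)
    (hodd3 : ∀ r, r % 4 = 3 → 3 ≤ r → ψ (2 * r + 1)
      = ψ (r + 2) * (ψ r) ^ 3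
        - 4 * (A - D) * (A - D * Y ^ 2) ^ 2 * ψ (r - 1) * (ψ (r + 1)) ^ 3 / (Y + 1) ^ 2)
    (heven0 : ∀ r, r % 4 = 0 → 4 ≤ r → ψ (2 * r)
      = ψ r / (Y + 1) * (ψ (r + 2) * (ψ (r - 1)) ^ 2 - ψ (r - 2) * (ψ (r + 1)) ^ 2))
    (heven1 : ∀ r, r % 4 = 1 → 5 ≤ r → ψ (2 * r)
      = ψ r / (Y + 1)
          * ((A - D) * ψ (r + 2) * (ψ (r - 1)) ^ 2 - ψ (r - 2) * (ψ (r + 1)) ^ 2))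
    (heven2 : ∀ r, r % 4 = 2 → 6 ≤ r → ψ (2 * r)
      = ψ r / (Y + 1) * (ψ (r + 2) * (ψ (r - 1)) ^ 2 - ψ (r - 2) * (ψ (r + 1)) ^ 2))
    (heven3 : ∀ r, r % 4 = 3 → 3 ≤ r → ψ (2 * r)
      = ψ r / (Y + 1)
          * (ψ (r + 2) * (ψ (r - 1)) ^ 2 - (A - D) * ψ (r - 2) * (ψ (r + 1)) ^ 2)) :
    ∀ n, 1 ≤ n → ∃ p : MvPolynomial (Fin 3) ℤ,
      ψ n = algebraMap (MvPolynomial (Fin 3) ℤ) _ p ∧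
      (Even n → (X 2 + 1 : MvPolynomial (Fin 3) ℤ) ∣ p) :=
  edwards_division_polynomial_integral_general ψ A D Y hA hD hY h1 h2 h3 h4 hodd0 hodd1 hodd2 hodd3
    heven0 heven1 heven2 heven3
end

section
/- Each twisted Edwards division polynomial ψ̃ₙ(a,d,y), considered as a polynomial in a and d with coefficients in ℤ[y], is homogeneous in (a,d) of degree m(n) − k(n), where m(n) = (n²−1)/2 for n odd, m(n) = (n²−2)/2 for n even, and k(n) = ⌊3n²/8⌋. -/
/-!
Put `c = y + 1`. By strong induction, `ψ̃ₙ = c ^ [n even] * pₙ` with `pₙ ∈ ℤ[y][a, d]` homogeneous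
of degree `(n² - 1) / 8`, which is `m(n) - k(n)`. In each recursion the factors `ψ̃ⱼ` supply at
least as many factors `c` as the recursion divides by, `c`, `4` and `y` have degree `0` while
`a - d` and `a - dy²` have degree `1`, and the two terms of each difference have the same degree:
this last point is a quadratic identity in `r`, checked separately on each residue class mod `4`.
-/

open MvPolynomial

def edwardsM (n : ℕ) : ℕ := if Odd n then (n ^ 2 - 1) / 2 else (n ^ 2 - 2) / 2

def edwardsK (n : ℕ) : ℕ := 3 * n ^ 2 / 8

theorem edwardsM_sub_edwardsK {n : ℕ} (hn : 1 ≤ n) :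
    edwardsM n - edwardsK n = (n ^ 2 - 1) / 8 := by
  have hsq : n ^ 2 % 8 = (n % 8) ^ 2 % 8 := Nat.pow_mod n 2 8
  have hpos : 1 ≤ n ^ 2 := Nat.one_le_pow _ _ hn
  have hlt := Nat.mod_lt n (show 8 > 0 by norm_num)
  unfold edwardsM edwardsK
  split_ifs with hodd
  · rw [Nat.odd_iff] at hodd
    interval_cases hr : n % 8 <;> omega
  · rw [Nat.not_odd_iff] at hodd
    interval_cases hr : n % 8 <;> omega

theorem Nat.induction_on_halving {P : ℕ → Prop} (h1 : P 1) (h2 : P 2) (h3 : P 3) (h4 : P 4)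
    (hodd : ∀ r, 2 ≤ r → P (r - 1) → P r → P (r + 1) → P (r + 2) → P (2 * r + 1))
    (heven : ∀ r, 3 ≤ r → P (r - 2) → P (r - 1) → P r → P (r + 1) → P (r + 2) → P (2 * r)) :
    ∀ n, 1 ≤ n → P n := by
  intro n hn
  induction n using Nat.strong_induction_on with
  | _ n ih =>
  obtain rfl | rfl | rfl | rfl | hn : n = 1 ∨ n = 2 ∨ n = 3 ∨ n = 4 ∨ 5 ≤ n := by omega
  · exact h1
  · exact h2
  · exact h3
  · exact h4
  obtain ⟨r, rfl | rfl⟩ := Nat.even_or_odd' n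
  · exact heven r (by omega) (ih _ (by omega) (by omega)) (ih _ (by omega) (by omega))
      (ih _ (by omega) (by omega)) (ih _ (by omega) (by omega)) (ih _ (by omega) (by omega))
  · exact hodd r (by omega) (ih _ (by omega) (by omega)) (ih _ (by omega) (by omega))
      (ih _ (by omega) (by omega)) (ih _ (by omega) (by omega))

namespace MvPolynomial

section CommRing

variable {σ S K : Type*} [CommRing S] [CommRing K] [Algebra (MvPolynomial σ S) K]

def IsPowMulHomogeneous (c : MvPolynomial σ S) (j k : ℕ) (x : K) : Prop :=
  ∃ p : MvPolynomial σ S, p.IsHomogeneous k ∧ algebraMap _ K (c ^ j * p) = x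

namespace IsPowMulHomogeneous

variable {c p : MvPolynomial σ S} {i j k l : ℕ} {x y : K}

theorem of_isHomogeneous (hp : p.IsHomogeneous k) :
    IsPowMulHomogeneous c 0 k (algebraMap _ K p) :=
  ⟨p, hp, by rw [pow_zero, one_mul]⟩

theorem ofNat (n : ℕ) [n.AtLeastTwo] : IsPowMulHomogeneous c 0 0 (OfNat.ofNat n : K) :=
  ⟨C (OfNat.ofNat n), isHomogeneous_C _ _, by rw [pow_zero, one_mul, map_ofNat C, map_ofNat]⟩

theorem mul (hx : IsPowMulHomogeneous c i k x) (hy : IsPowMulHomogeneous c j l y) :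
    IsPowMulHomogeneous c (i + j) (k + l) (x * y) := by
  obtain ⟨p, hp, rfl⟩ := hx
  obtain ⟨q, hq, rfl⟩ := hy
  exact ⟨p * q, hp.mul hq, by simp only [map_mul, map_pow]; ring⟩

theorem pow (hx : IsPowMulHomogeneous c j k x) (m : ℕ) :
    IsPowMulHomogeneous c (j * m) (k * m) (x ^ m) := by
  obtain ⟨p, hp, rfl⟩ := hx
  exact ⟨p ^ m, hp.pow m, by simp only [map_mul, map_pow]; ring⟩

theorem sub (hx : IsPowMulHomogeneous c j k x) (hy : IsPowMulHomogeneous c j k y) :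
    IsPowMulHomogeneous c j k (x - y) := by
  obtain ⟨p, hp, rfl⟩ := hx
  obtain ⟨q, hq, rfl⟩ := hy
  exact ⟨p - q, hp.sub hq, by simp only [map_mul, map_sub, map_pow]; ring⟩

theorem of_le_of_eq (hc : c.IsHomogeneous 0) (hx : IsPowMulHomogeneous c i k x) (hj : j ≤ i)
    (hk : k = l) : IsPowMulHomogeneous c j l x := by
  obtain ⟨p, hp, rfl⟩ := hx
  subst hk
  refine ⟨c ^ (i - j) * p, by simpa using (hc.pow (i - j)).mul hp, ?_⟩
  rw [← mul_assoc, ← pow_add, Nat.add_sub_cancel' hj]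

theorem exists_eq_algebraMap (hc : c.IsHomogeneous 0) (hx : IsPowMulHomogeneous c j k x) :
    ∃ p : MvPolynomial σ S, x = algebraMap _ K p ∧ p.IsHomogeneous k := by
  obtain ⟨p, hp, rfl⟩ := hx.of_le_of_eq hc (Nat.zero_le j) rfl
  exact ⟨p, by rw [pow_zero, one_mul], hp⟩

end IsPowMulHomogeneous

end CommRing

section Field

variable {σ S K : Type*} [CommRing S] [Field K] [Algebra (MvPolynomial σ S) K]
  {c : MvPolynomial σ S} {i k : ℕ} {x : K}

theorem IsPowMulHomogeneous.div_pow (hx : IsPowMulHomogeneous c i k x)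
    (hc : algebraMap _ K c ≠ 0) {s : ℕ} (hs : s ≤ i) :
    IsPowMulHomogeneous c (i - s) k (x / algebraMap _ K c ^ s) := by
  obtain ⟨p, hp, rfl⟩ := hx
  refine ⟨p, hp, ?_⟩
  rw [eq_div_iff (pow_ne_zero _ hc), map_mul, map_mul, map_pow, map_pow, mul_right_comm,
    ← pow_add, Nat.sub_add_cancel hs]

theorem IsPowMulHomogeneous.div (hx : IsPowMulHomogeneous c i k x)
    (hc : algebraMap _ K c ≠ 0) (hi : 1 ≤ i) :
    IsPowMulHomogeneous c (i - 1) k (x / algebraMap _ K c) := by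
  simpa only [pow_one] using hx.div_pow hc hi

end Field

end MvPolynomial

section EdwardsRecursion

variable {σ S K : Type*} [CommRing S] [Field K] [Algebra (MvPolynomial σ S) K]
  {c : MvPolynomial σ S} {ψ : ℕ → K} {A D Y : K}

/-- `x = c ^ [n even] * p` with `p` homogeneous of degree `(n ^ 2 - 1) / 8`. -/
abbrev IsEdwardsHomogeneous (c : MvPolynomial σ S) (n : ℕ) (x : K) : Prop :=
  IsPowMulHomogeneous c ((n + 1) % 2) ((n ^ 2 - 1) / 8) x
theorem IsEdwardsHomogeneous.odd_step (hc : c.IsHomogeneous 0) (hcY : Y + 1 = algebraMap _ K c)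
    (hcne : algebraMap _ K c ≠ 0) (hε : IsPowMulHomogeneous c 0 1 (A - D))
    (hg : IsPowMulHomogeneous c 0 1 (A - D * Y ^ 2))
    (hodd0 : ∀ r, r % 4 = 0 → 4 ≤ r → ψ (2 * r + 1)
      = 4 * (A - D) * (A - D * Y ^ 2) ^ 2 * ψ (r + 2) * (ψ r) ^ 3 / (Y + 1) ^ 2
        - ψ (r - 1) * (ψ (r + 1)) ^ 3)
    (hodd1 : ∀ r, r % 4 = 1 → 5 ≤ r → ψ (2 * r + 1)
      = ψ (r + 2) * (ψ r) ^ 3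
        - 4 * (A - D * Y ^ 2) ^ 2 * ψ (r - 1) * (ψ (r + 1)) ^ 3 / (Y + 1) ^ 2)
    (hodd2 : ∀ r, r % 4 = 2 → 2 ≤ r → ψ (2 * r + 1)
      = 4 * (A - D * Y ^ 2) ^ 2 * ψ (r + 2) * (ψ r) ^ 3 / (Y + 1) ^ 2
        - ψ (r - 1) * (ψ (r + 1)) ^ 3)
    (hodd3 : ∀ r, r % 4 = 3 → 3 ≤ r → ψ (2 * r + 1)
      = ψ (r + 2) * (ψ r) ^ 3
        - 4 * (A - D) * (A - D * Y ^ 2) ^ 2 * ψ (r - 1) * (ψ (r + 1)) ^ 3 / (Y + 1) ^ 2)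
    {r : ℕ} (hr : 2 ≤ r) (hm1 : IsEdwardsHomogeneous c (r - 1) (ψ (r - 1)))
    (h0 : IsEdwardsHomogeneous c r (ψ r)) (hp1 : IsEdwardsHomogeneous c (r + 1) (ψ (r + 1)))
    (hp2 : IsEdwardsHomogeneous c (r + 2) (ψ (r + 2))) :
    IsEdwardsHomogeneous c (2 * r + 1) (ψ (2 * r + 1)) := by
  have h4 : IsPowMulHomogeneous c 0 0 (4 : K) := .ofNat 4
  have hα : IsPowMulHomogeneous c 0 3 (4 * (A - D) * (A - D * Y ^ 2) ^ 2) :=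
    (h4.mul hε).mul (hg.pow 2)
  have hβ : IsPowMulHomogeneous c 0 2 (4 * (A - D * Y ^ 2) ^ 2) := h4.mul (hg.pow 2)
  obtain h | h | h | h : r % 4 = 0 ∨ r % 4 = 1 ∨ r % 4 = 2 ∨ r % 4 = 3 := by omega
  · obtain ⟨u, rfl⟩ : ∃ u, r = 4 * u + 4 := ⟨r / 4 - 1, by omega⟩
    rw [hodd0 _ h (by omega), hcY]
    simp only [Nat.reduceSubDiff] at hm1 ⊢
    refine ((((hα.mul hp2).mul (h0.pow 3)).div_pow hcne ?_).of_le_of_eq hc ?_ ?_).sub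
      ((hm1.mul (hp1.pow 3)).of_le_of_eq hc ?_ ?_) <;> ring_nf <;> omega
  · obtain ⟨u, rfl⟩ : ∃ u, r = 4 * u + 5 := ⟨r / 4 - 1, by omega⟩
    rw [hodd1 _ h (by omega), hcY]
    simp only [Nat.reduceSubDiff] at hm1 ⊢
    refine ((hp2.mul (h0.pow 3)).of_le_of_eq hc ?_ ?_).sub
      ((((hβ.mul hm1).mul (hp1.pow 3)).div_pow hcne ?_).of_le_of_eq hc ?_ ?_) <;> ring_nf <;> omega
  · obtain ⟨u, rfl⟩ : ∃ u, r = 4 * u + 2 := ⟨r / 4, by omega⟩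
    rw [hodd2 _ h (by omega), hcY]
    simp only [Nat.reduceSubDiff] at hm1 ⊢
    refine ((((hβ.mul hp2).mul (h0.pow 3)).div_pow hcne ?_).of_le_of_eq hc ?_ ?_).sub
      ((hm1.mul (hp1.pow 3)).of_le_of_eq hc ?_ ?_) <;> ring_nf <;> omega
  · obtain ⟨u, rfl⟩ : ∃ u, r = 4 * u + 3 := ⟨r / 4, by omega⟩
    rw [hodd3 _ h (by omega), hcY]
    simp only [Nat.reduceSubDiff] at hm1 ⊢
    refine ((hp2.mul (h0.pow 3)).of_le_of_eq hc ?_ ?_).sub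
      ((((hα.mul hm1).mul (hp1.pow 3)).div_pow hcne ?_).of_le_of_eq hc ?_ ?_) <;> ring_nf <;> omega

theorem IsEdwardsHomogeneous.even_step (hc : c.IsHomogeneous 0) (hcY : Y + 1 = algebraMap _ K c)
    (hcne : algebraMap _ K c ≠ 0) (hε : IsPowMulHomogeneous c 0 1 (A - D))
    (heven0 : ∀ r, r % 4 = 0 → 4 ≤ r → ψ (2 * r)
      = ψ r / (Y + 1) * (ψ (r + 2) * (ψ (r - 1)) ^ 2 - ψ (r - 2) * (ψ (r + 1)) ^ 2))
    (heven1 : ∀ r, r % 4 = 1 → 5 ≤ r → ψ (2 * r)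
      = ψ r / (Y + 1)
          * ((A - D) * ψ (r + 2) * (ψ (r - 1)) ^ 2 - ψ (r - 2) * (ψ (r + 1)) ^ 2))
    (heven2 : ∀ r, r % 4 = 2 → 6 ≤ r → ψ (2 * r)
      = ψ r / (Y + 1) * (ψ (r + 2) * (ψ (r - 1)) ^ 2 - ψ (r - 2) * (ψ (r + 1)) ^ 2))
    (heven3 : ∀ r, r % 4 = 3 → 3 ≤ r → ψ (2 * r)
      = ψ r / (Y + 1)
          * (ψ (r + 2) * (ψ (r - 1)) ^ 2 - (A - D) * ψ (r - 2) * (ψ (r + 1)) ^ 2))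
    {r : ℕ} (hr : 3 ≤ r) (hm2 : IsEdwardsHomogeneous c (r - 2) (ψ (r - 2)))
    (hm1 : IsEdwardsHomogeneous c (r - 1) (ψ (r - 1))) (h0 : IsEdwardsHomogeneous c r (ψ r))
    (hp1 : IsEdwardsHomogeneous c (r + 1) (ψ (r + 1)))
    (hp2 : IsEdwardsHomogeneous c (r + 2) (ψ (r + 2))) :
    IsEdwardsHomogeneous c (2 * r) (ψ (2 * r)) := by
  obtain h | h | h | h : r % 4 = 0 ∨ r % 4 = 1 ∨ r % 4 = 2 ∨ r % 4 = 3 := by omega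
  · obtain ⟨u, rfl⟩ : ∃ u, r = 4 * u + 4 := ⟨r / 4 - 1, by omega⟩
    rw [heven0 _ h (by omega), hcY, div_mul_eq_mul_div, mul_sub, sub_div]
    simp only [Nat.reduceSubDiff] at hm1 hm2 ⊢
    refine (((h0.mul (hp2.mul (hm1.pow 2))).div hcne ?_).of_le_of_eq hc ?_ ?_).sub
      (((h0.mul (hm2.mul (hp1.pow 2))).div hcne ?_).of_le_of_eq hc ?_ ?_) <;> ring_nf <;> omega
  · obtain ⟨u, rfl⟩ : ∃ u, r = 4 * u + 5 := ⟨r / 4 - 1, by omega⟩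
    rw [heven1 _ h (by omega), hcY, div_mul_eq_mul_div, mul_sub, sub_div]
    simp only [Nat.reduceSubDiff] at hm1 hm2 ⊢
    refine (((h0.mul ((hε.mul hp2).mul (hm1.pow 2))).div hcne ?_).of_le_of_eq hc ?_ ?_).sub
      (((h0.mul (hm2.mul (hp1.pow 2))).div hcne ?_).of_le_of_eq hc ?_ ?_) <;> ring_nf <;> omega
  · obtain ⟨u, rfl⟩ : ∃ u, r = 4 * u + 6 := ⟨r / 4 - 1, by omega⟩
    rw [heven2 _ h (by omega), hcY, div_mul_eq_mul_div, mul_sub, sub_div]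
    simp only [Nat.reduceSubDiff] at hm1 hm2 ⊢
    refine (((h0.mul (hp2.mul (hm1.pow 2))).div hcne ?_).of_le_of_eq hc ?_ ?_).sub
      (((h0.mul (hm2.mul (hp1.pow 2))).div hcne ?_).of_le_of_eq hc ?_ ?_) <;> ring_nf <;> omega
  · obtain ⟨u, rfl⟩ : ∃ u, r = 4 * u + 3 := ⟨r / 4, by omega⟩
    rw [heven3 _ h (by omega), hcY, div_mul_eq_mul_div, mul_sub, sub_div]
    simp only [Nat.reduceSubDiff] at hm1 hm2 ⊢
    refine (((h0.mul (hp2.mul (hm1.pow 2))).div hcne ?_).of_le_of_eq hc ?_ ?_).sub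
      (((h0.mul ((hε.mul hm2).mul (hp1.pow 2))).div hcne ?_).of_le_of_eq hc ?_ ?_) <;>
      ring_nf <;> omega

end EdwardsRecursion

theorem edwards_division_polynomial_homogeneous_general
    (ψ : ℕ → FractionRing (MvPolynomial (Fin 2) (Polynomial ℤ)))
    (A D Y : FractionRing (MvPolynomial (Fin 2) (Polynomial ℤ)))
    (hA : A = algebraMap (MvPolynomial (Fin 2) (Polynomial ℤ)) _ (X 0))
    (hD : D = algebraMap (MvPolynomial (Fin 2) (Polynomial ℤ)) _ (X 1))
    (hY : Y = algebraMap (MvPolynomial (Fin 2) (Polynomial ℤ)) _ (C Polynomial.X))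
    (h1 : ψ 1 = 1) (h2 : ψ 2 = Y + 1)
    (h3 : ψ 3 = -D * Y ^ 4 - 2 * D * Y ^ 3 + 2 * A * Y + A)
    (h4 : ψ 4 = -2 * D * Y ^ 6 - 2 * D * Y ^ 5 + 2 * A * Y ^ 2 + 2 * A * Y)
    (hodd0 : ∀ r, r % 4 = 0 → 4 ≤ r → ψ (2 * r + 1)
      = 4 * (A - D) * (A - D * Y ^ 2) ^ 2 * ψ (r + 2) * (ψ r) ^ 3 / (Y + 1) ^ 2
        - ψ (r - 1) * (ψ (r + 1)) ^ 3)
    (hodd1 : ∀ r, r % 4 = 1 → 5 ≤ r → ψ (2 * r + 1)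
      = ψ (r + 2) * (ψ r) ^ 3
        - 4 * (A - D * Y ^ 2) ^ 2 * ψ (r - 1) * (ψ (r + 1)) ^ 3 / (Y + 1) ^ 2)
    (hodd2 : ∀ r, r % 4 = 2 → 2 ≤ r → ψ (2 * r + 1)
      = 4 * (A - D * Y ^ 2) ^ 2 * ψ (r + 2) * (ψ r) ^ 3 / (Y + 1) ^ 2
        - ψ (r - 1) * (ψ (r + 1)) ^ 3)
    (hodd3 : ∀ r, r % 4 = 3 → 3 ≤ r → ψ (2 * r + 1)
      = ψ (r + 2) * (ψ r) ^ 3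
        - 4 * (A - D) * (A - D * Y ^ 2) ^ 2 * ψ (r - 1) * (ψ (r + 1)) ^ 3 / (Y + 1) ^ 2)
    (heven0 : ∀ r, r % 4 = 0 → 4 ≤ r → ψ (2 * r)
      = ψ r / (Y + 1) * (ψ (r + 2) * (ψ (r - 1)) ^ 2 - ψ (r - 2) * (ψ (r + 1)) ^ 2))
    (heven1 : ∀ r, r % 4 = 1 → 5 ≤ r → ψ (2 * r)
      = ψ r / (Y + 1)
          * ((A - D) * ψ (r + 2) * (ψ (r - 1)) ^ 2 - ψ (r - 2) * (ψ (r + 1)) ^ 2))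
    (heven2 : ∀ r, r % 4 = 2 → 6 ≤ r → ψ (2 * r)
      = ψ r / (Y + 1) * (ψ (r + 2) * (ψ (r - 1)) ^ 2 - ψ (r - 2) * (ψ (r + 1)) ^ 2))
    (heven3 : ∀ r, r % 4 = 3 → 3 ≤ r → ψ (2 * r)
      = ψ r / (Y + 1)
          * (ψ (r + 2) * (ψ (r - 1)) ^ 2 - (A - D) * ψ (r - 2) * (ψ (r + 1)) ^ 2)) :
    ∀ n, 1 ≤ n → ∃ p : MvPolynomial (Fin 2) (Polynomial ℤ),
      ψ n = algebraMap (MvPolynomial (Fin 2) (Polynomial ℤ)) _ p ∧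
      p.IsHomogeneous (edwardsM n - edwardsK n) := by
  set c : MvPolynomial (Fin 2) (Polynomial ℤ) := C (Polynomial.X + 1)
  have hc : c.IsHomogeneous 0 := isHomogeneous_C _ _
  have hcY : Y + 1 = algebraMap _ _ c := by simp [c, hY]
  have hcne : algebraMap _ (FractionRing (MvPolynomial (Fin 2) (Polynomial ℤ))) c ≠ 0 :=
    (map_ne_zero_iff _ (IsFractionRing.injective _ _)).2
      (C_ne_zero.2 (Polynomial.monic_X_add_C (1 : ℤ)).ne_zero)
  have hε : IsPowMulHomogeneous c 0 1 (A - D) := by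
    rw [hA, hD, ← map_sub]
    exact .of_isHomogeneous ((isHomogeneous_X _ _).sub (isHomogeneous_X _ _))
  have hg : IsPowMulHomogeneous c 0 1 (A - D * Y ^ 2) := by
    rw [hA, hD, hY, ← map_pow, ← map_mul, ← map_sub]
    exact .of_isHomogeneous ((isHomogeneous_X _ _).sub
      ((isHomogeneous_X _ 1).mul ((isHomogeneous_C _ Polynomial.X).pow 2)))
  have hψ : ∀ n, 1 ≤ n → IsEdwardsHomogeneous c n (ψ n) := by
    refine Nat.induction_on_halving (P := fun n ↦ IsEdwardsHomogeneous c n (ψ n)) ?_ ?_ ?_ ?_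
      (fun _ hr ↦ .odd_step hc hcY hcne hε hg hodd0 hodd1 hodd2 hodd3 hr)
      (fun _ hr ↦ .even_step hc hcY hcne hε heven0 heven1 heven2 heven3 hr)
    · exact ⟨1, isHomogeneous_one _ _, by rw [h1, pow_zero, mul_one, map_one]⟩
    · exact ⟨1, isHomogeneous_one _ _, by rw [h2, hcY, pow_one, mul_one]⟩
    · refine ⟨C (2 * Polynomial.X + 1) * X 0 - C (Polynomial.X ^ 4 + 2 * Polynomial.X ^ 3) * X 1,
        (isHomogeneous_C_mul_X _ _).sub (isHomogeneous_C_mul_X _ _), ?_⟩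
      rw [h3, hA, hD, hY]
      simp only [map_sub, map_mul, map_add, map_pow, map_one, map_ofNat]
      ring
    · refine ⟨C (2 * Polynomial.X) * X 0 - C (2 * Polynomial.X ^ 5) * X 1,
        (isHomogeneous_C_mul_X _ _).sub (isHomogeneous_C_mul_X _ _), ?_⟩
      rw [h4, hA, hD, hY]
      simp only [c, map_sub, map_mul, map_add, map_pow, map_one, map_ofNat]
      ring
  intro n hn
  rw [edwardsM_sub_edwardsK hn]
  exact (hψ n hn).exists_eq_algebraMap hc

/-- Lemma hom: each ψ̃ₙ(a,d,y), viewed as a polynomial in a and d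
with coefficients in ℤ[y] (i.e. an element of `MvPolynomial (Fin 2) (Polynomial ℤ)`
with `X 0 = a`, `X 1 = d`, and `C Polynomial.X = y`), is homogeneous in (a,d)
of degree m(n) − k(n). -/
theorem edwards_division_polynomial_homogeneous
    (ψ : ℕ → FractionRing (MvPolynomial (Fin 2) (Polynomial ℤ)))
    (A D Y : FractionRing (MvPolynomial (Fin 2) (Polynomial ℤ)))
    (hA : A = algebraMap (MvPolynomial (Fin 2) (Polynomial ℤ)) _ (X 0))
    (hD : D = algebraMap (MvPolynomial (Fin 2) (Polynomial ℤ)) _ (X 1))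
    (hY : Y = algebraMap (MvPolynomial (Fin 2) (Polynomial ℤ)) _ (C Polynomial.X))
    (h0 : ψ 0 = 0) (h1 : ψ 1 = 1) (h2 : ψ 2 = Y + 1)
    (h3 : ψ 3 = -D * Y ^ 4 - 2 * D * Y ^ 3 + 2 * A * Y + A)
    (h4 : ψ 4 = -2 * D * Y ^ 6 - 2 * D * Y ^ 5 + 2 * A * Y ^ 2 + 2 * A * Y)
    (hodd0 : ∀ r, r % 4 = 0 → 4 ≤ r → ψ (2 * r + 1)
      = 4 * (A - D) * (A - D * Y ^ 2) ^ 2 * ψ (r + 2) * (ψ r) ^ 3 / (Y + 1) ^ 2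
        - ψ (r - 1) * (ψ (r + 1)) ^ 3)
    (hodd1 : ∀ r, r % 4 = 1 → 5 ≤ r → ψ (2 * r + 1)
      = ψ (r + 2) * (ψ r) ^ 3
        - 4 * (A - D * Y ^ 2) ^ 2 * ψ (r - 1) * (ψ (r + 1)) ^ 3 / (Y + 1) ^ 2)
    (hodd2 : ∀ r, r % 4 = 2 → 2 ≤ r → ψ (2 * r + 1)
      = 4 * (A - D * Y ^ 2) ^ 2 * ψ (r + 2) * (ψ r) ^ 3 / (Y + 1) ^ 2
        - ψ (r - 1) * (ψ (r + 1)) ^ 3)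
    (hodd3 : ∀ r, r % 4 = 3 → 3 ≤ r → ψ (2 * r + 1)
      = ψ (r + 2) * (ψ r) ^ 3
        - 4 * (A - D) * (A - D * Y ^ 2) ^ 2 * ψ (r - 1) * (ψ (r + 1)) ^ 3 / (Y + 1) ^ 2)
    (heven0 : ∀ r, r % 4 = 0 → 4 ≤ r → ψ (2 * r)
      = ψ r / (Y + 1) * (ψ (r + 2) * (ψ (r - 1)) ^ 2 - ψ (r - 2) * (ψ (r + 1)) ^ 2))
    (heven1 : ∀ r, r % 4 = 1 → 5 ≤ r → ψ (2 * r)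
      = ψ r / (Y + 1)
          * ((A - D) * ψ (r + 2) * (ψ (r - 1)) ^ 2 - ψ (r - 2) * (ψ (r + 1)) ^ 2))
    (heven2 : ∀ r, r % 4 = 2 → 6 ≤ r → ψ (2 * r)
      = ψ r / (Y + 1) * (ψ (r + 2) * (ψ (r - 1)) ^ 2 - ψ (r - 2) * (ψ (r + 1)) ^ 2))
    (heven3 : ∀ r, r % 4 = 3 → 3 ≤ r → ψ (2 * r)
      = ψ r / (Y + 1)
          * (ψ (r + 2) * (ψ (r - 1)) ^ 2 - (A - D) * ψ (r - 2) * (ψ (r + 1)) ^ 2)) :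
    ∀ n, 1 ≤ n → ∃ p : MvPolynomial (Fin 2) (Polynomial ℤ),
      ψ n = algebraMap (MvPolynomial (Fin 2) (Polynomial ℤ)) _ p ∧
      p.IsHomogeneous (edwardsM n - edwardsK n) :=
  edwards_division_polynomial_homogeneous_general ψ A D Y hA hD hY h1 h2 h3 h4 hodd0 hodd1 hodd2
    hodd3 heven0 heven1 heven2 heven3
end

section
/- Define polynomials Pₙ(t), Qₙ(t) ∈ ℤ[a,d][t] by P₁ = 1, Q₁ = 1, P₂ = 2(1−dt), Q₂ = 1−adt², with the recursions: for n even, P_{n+1} = 2(1−at)(1−dt)PₙQ_{n−1}Qₙ − P_{n−1}((1−dt)Qₙ² − adt²(1−at)Pₙ²) and Q_{n+1} = Q_{n−1}((1−dt)Qₙ² − adt²(1−at)Pₙ²); for n odd, P_{n+1} = 2(1−dt)PₙQ_{n−1}Qₙ − P_{n−1}(Qₙ² − adt²Pₙ²) and Q_{n+1} = Q_{n−1}(Qₙ² − adt²Pₙ²). Let (x,y) lie on ax²+y²=1+dx²y² and let (xₙ,yₙ) = [n](x,y) under the Edwards group law, with all denominators in the relevant addition-law computations nonzero and Qₙ(x²)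 ≠ 0 for all n involved. Then xₙ = x·y·Pₙ(x²)/Qₙ(x²) if n is even, and xₙ = x·Pₙ(x²)/Qₙ(x²) if n is odd. -/
/-!
Write `xₙ` for the first coordinate of `[n](x, y)`. As `[n ± 1](x, y) = [n](x, y) ± (x, y)` with
`-(x, y) = (-x, y)`, the addition law and the curve equation give the three-term recurrence
`(xₙ₊₁ + xₙ₋₁) (1 - a d x² xₙ²) = 2 (1 - d x²) y xₙ`.
Substituting `xₙ = x Pₙ(x²)/Qₙ(x²)` (`n` odd) or `xₙ = x y Pₙ(x²)/Qₙ(x²)` (`n` even) and clearing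
denominators turns it into the recursions defining `Pₙ₊₁` and `Qₙ₊₁` (for even `n` after using
`(1 - d x²) y² = 1 - a x²`), so induction from the doubling formula for `[2](x, y)` proves the
theorem.
-/

open Polynomial

section Edwards

variable {k : Type*} [Field k] {a d : k}

def OnEdwards (a d : k) (p : k × k) : Prop :=
  a * p.1 ^ 2 + p.2 ^ 2 = 1 + d * p.1 ^ 2 * p.2 ^ 2

def edwardsAdd (a d : k) (p q : k × k) : k × k :=
  ((p.1 * q.2 + q.1 * p.2) / (1 + d * p.1 * q.1 * p.2 * q.2),
    (p.2 * q.2 - a * p.1 * q.1) / (1 - d * p.1 * q.1 * p.2 * q.2))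

theorem fst_edwardsAdd_neg (r q : k × k) :
    (edwardsAdd a d r (-q.1, q.2)).1 = (r.1 * q.2 - q.1 * r.2) / (1 - d * r.1 * q.1 * r.2 * q.2) := by
  simp only [edwardsAdd]
  ring

namespace OnEdwards

variable {p q r : k × k}

theorem add (hp : OnEdwards a d p) (hq : OnEdwards a d q)
    (hplus : 1 + d * p.1 * q.1 * p.2 * q.2 ≠ 0) (hminus : 1 - d * p.1 * q.1 * p.2 * q.2 ≠ 0) :
    OnEdwards a d (edwardsAdd a d p q) := by
  obtain ⟨x₁, y₁⟩ := p
  obtain ⟨x₂, y₂⟩ := q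
  simp only [OnEdwards, edwardsAdd] at *
  have hsum : a * (x₁ * y₂ + x₂ * y₁) ^ 2 + (y₁ * y₂ - a * x₁ * x₂) ^ 2
      = (1 + d * x₁ ^ 2 * y₁ ^ 2) * (1 + d * x₂ ^ 2 * y₂ ^ 2) := by
    rw [← hp, ← hq]; ring
  have hdiff₁ : (y₁ ^ 2 - a * x₁ ^ 2) ^ 2
      = (1 + d * x₁ ^ 2 * y₁ ^ 2) ^ 2 - 4 * a * x₁ ^ 2 * y₁ ^ 2 := by
    rw [← hp]; ring
  have hdiff₂ : (y₂ ^ 2 - a * x₂ ^ 2) ^ 2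
      = (1 + d * x₂ ^ 2 * y₂ ^ 2) ^ 2 - 4 * a * x₂ ^ 2 * y₂ ^ 2 := by
    rw [← hq]; ring
  generalize hu : 1 + d * x₁ * x₂ * y₁ * y₂ = u at hplus ⊢
  generalize hv : 1 - d * x₁ * x₂ * y₁ * y₂ = v at hminus ⊢
  field_simp
  subst hu hv
  linear_combination (1 + (d * x₁ * x₂ * y₁ * y₂) ^ 2) * hsum
    - d * x₁ ^ 2 * y₁ ^ 2 * hdiff₂ - d * x₂ ^ 2 * y₂ ^ 2 * hdiff₁

theorem fst_edwardsAdd_edwardsAdd_neg (hp : OnEdwards a d p) (hq : OnEdwards a d q)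
    (hplus : 1 + d * p.1 * q.1 * p.2 * q.2 ≠ 0) (hminus : 1 - d * p.1 * q.1 * p.2 * q.2 ≠ 0)
    (hsub : 1 - d * (edwardsAdd a d p q).1 * q.1 * (edwardsAdd a d p q).2 * q.2 ≠ 0) :
    (edwardsAdd a d (edwardsAdd a d p q) (-q.1, q.2)).1 = p.1 := by
  rw [fst_edwardsAdd_neg, div_eq_iff hsub]
  obtain ⟨x₁, y₁⟩ := p
  obtain ⟨x₂, y₂⟩ := q
  simp only [OnEdwards, edwardsAdd] at *
  generalize hu : 1 + d * x₁ * x₂ * y₁ * y₂ = u at hplus ⊢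
  generalize hv : 1 - d * x₁ * x₂ * y₁ * y₂ = v at hminus ⊢
  field_simp
  subst hu hv
  linear_combination x₁ * (hq - d * x₂ ^ 2 * y₂ ^ 2 * hp)

theorem fst_edwardsAdd_add_fst_edwardsAdd_neg (hr : OnEdwards a d r) (hq : OnEdwards a d q)
    (hplus : 1 + d * r.1 * q.1 * r.2 * q.2 ≠ 0) (hminus : 1 - d * r.1 * q.1 * r.2 * q.2 ≠ 0) :
    ((edwardsAdd a d r q).1 + (edwardsAdd a d r (-q.1, q.2)).1) * (1 - a * d * q.1 ^ 2 * r.1 ^ 2)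
      = 2 * (1 - d * q.1 ^ 2) * q.2 * r.1 := by
  rw [fst_edwardsAdd_neg]
  obtain ⟨x₁, y₁⟩ := r
  obtain ⟨x₂, y₂⟩ := q
  simp only [OnEdwards, edwardsAdd] at *
  generalize hu : 1 + d * x₁ * x₂ * y₁ * y₂ = u at hplus ⊢
  generalize hv : 1 - d * x₁ * x₂ * y₁ * y₂ = v at hminus ⊢
  field_simp
  subst hu hv
  linear_combination 2 * x₁ * y₂ * (d ^ 2 * x₂ ^ 2 * x₁ ^ 2 * y₁ ^ 2 * hq - d * x₂ ^ 2 * hr)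

theorem fst_edwardsAdd_self (hp : OnEdwards a d p) (hplus : 1 + d * p.1 * p.1 * p.2 * p.2 ≠ 0) :
    (edwardsAdd a d p p).1 * (1 - a * d * p.1 ^ 4) = 2 * (1 - d * p.1 ^ 2) * p.1 * p.2 := by
  obtain ⟨x, y⟩ := p
  simp only [OnEdwards, edwardsAdd] at *
  rw [div_mul_eq_mul_div, div_eq_iff hplus]
  linear_combination (-2 * d * x ^ 3 * y) * hp

end OnEdwards

section Multiples

variable {q : k × k} {pts : ℕ → k × k}

theorem onEdwards_multiple (hq : OnEdwards a d q) (h1 : pts 1 = q)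
    (hsucc : ∀ n, 1 ≤ n → pts (n + 1) = edwardsAdd a d (pts n) q)
    (hden : ∀ n, 1 ≤ n → 1 + d * (pts n).1 * q.1 * (pts n).2 * q.2 ≠ 0
      ∧ 1 - d * (pts n).1 * q.1 * (pts n).2 * q.2 ≠ 0)
    {n : ℕ} (hn : 1 ≤ n) : OnEdwards a d (pts n) := by
  induction n, hn using Nat.le_induction with
  | base => rwa [h1]
  | succ m hm ih => rw [hsucc m hm]; exact ih.add hq (hden m hm).1 (hden m hm).2

theorem fst_multiple_recurrence (hq : OnEdwards a d q) (h1 : pts 1 = q)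
    (hsucc : ∀ n, 1 ≤ n → pts (n + 1) = edwardsAdd a d (pts n) q)
    (hden : ∀ n, 1 ≤ n → 1 + d * (pts n).1 * q.1 * (pts n).2 * q.2 ≠ 0
      ∧ 1 - d * (pts n).1 * q.1 * (pts n).2 * q.2 ≠ 0)
    {n : ℕ} (hn : 1 ≤ n) :
    ((pts (n + 2)).1 + (pts n).1) * (1 - a * d * q.1 ^ 2 * (pts (n + 1)).1 ^ 2)
      = 2 * (1 - d * q.1 ^ 2) * q.2 * (pts (n + 1)).1 := by
  have hcurve {m : ℕ} (hm : 1 ≤ m) := onEdwards_multiple hq h1 hsucc hden hm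
  obtain ⟨hplus, hminus⟩ := hden (n + 1) (by omega)
  have hprev : (edwardsAdd a d (pts (n + 1)) (-q.1, q.2)).1 = (pts n).1 := by
    rw [hsucc n hn] at hminus ⊢
    exact (hcurve hn).fst_edwardsAdd_edwardsAdd_neg hq (hden n hn).1 (hden n hn).2 hminus
  rw [← hprev, hsucc (n + 1) (by omega)]
  exact (hcurve (by omega)).fst_edwardsAdd_add_fst_edwardsAdd_neg hq hplus hminus

end Multiples

theorem mul_eq_of_three_term {c e X Y x₀ x₁ x₂ u₀ v₀ u₁ v₁ : k}
    (hrec : (x₂ + x₀) * (1 - c * x₁ ^ 2) = e * x₁) (h₀ : x₀ * v₀ = Y * u₀)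
    (h₁ : x₁ * v₁ = X * u₁) :
    x₂ * (v₀ * (v₁ ^ 2 - c * X ^ 2 * u₁ ^ 2))
      = e * X * u₁ * v₀ * v₁ - Y * u₀ * (v₁ ^ 2 - c * X ^ 2 * u₁ ^ 2) := by
  linear_combination (v₀ * v₁ ^ 2) * hrec
    + (c * (x₂ + x₀) * v₀ * (x₁ * v₁ + X * u₁) + e * v₀ * v₁) * h₁
    - (v₁ ^ 2 - c * X ^ 2 * u₁ ^ 2) * h₀

theorem mul_eval_Q_add_two_of_recurrence {x y : k} {P Q : ℕ → k[X]}
    (hE : a * x ^ 2 + y ^ 2 = 1 + d * x ^ 2 * y ^ 2)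
    (hPeven : ∀ n, 2 ≤ n → Even n → P (n + 1)
      = C 2 * (1 - C a * X) * (1 - C d * X) * P n * Q (n - 1) * Q n
        - P (n - 1) * ((1 - C d * X) * (Q n) ^ 2
            - C (a * d) * X ^ 2 * (1 - C a * X) * (P n) ^ 2))
    (hQeven : ∀ n, 2 ≤ n → Even n → Q (n + 1)
      = Q (n - 1) * ((1 - C d * X) * (Q n) ^ 2
          - C (a * d) * X ^ 2 * (1 - C a * X) * (P n) ^ 2))
    (hPodd : ∀ n, 2 ≤ n → Odd n → P (n + 1)
      = C 2 * (1 - C d * X) * P n * Q (n - 1) * Q n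
        - P (n - 1) * ((Q n) ^ 2 - C (a * d) * X ^ 2 * (P n) ^ 2))
    (hQodd : ∀ n, 2 ≤ n → Odd n → Q (n + 1)
      = Q (n - 1) * ((Q n) ^ 2 - C (a * d) * X ^ 2 * (P n) ^ 2))
    {m : ℕ} (hm : 1 ≤ m) {x₀ x₁ x₂ : k}
    (hrec : (x₂ + x₀) * (1 - a * d * x ^ 2 * x₁ ^ 2) = 2 * (1 - d * x ^ 2) * y * x₁)
    (h₀ : x₀ * (Q m).eval (x ^ 2) = (if Even m then x * y else x) * (P m).eval (x ^ 2))
    (h₁ : x₁ * (Q (m + 1)).eval (x ^ 2)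
      = (if Even (m + 1) then x * y else x) * (P (m + 1)).eval (x ^ 2)) :
    x₂ * (Q (m + 2)).eval (x ^ 2)
      = (if Even (m + 2) then x * y else x) * (P (m + 2)).eval (x ^ 2) := by
  rcases Nat.even_or_odd (m + 1) with hev | hodd
  · rw [if_pos hev] at h₁
    rw [if_neg (by grind)] at h₀
    rw [if_neg (by grind), hQeven (m + 1) (by omega) hev, hPeven (m + 1) (by omega) hev]
    simp only [eval_mul, eval_sub, eval_pow, eval_one, eval_C, eval_X, Nat.add_sub_cancel]
    set u₀ := (P m).eval (x ^ 2)
    set v₀ := (Q m).eval (x ^ 2)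
    set u₁ := (P (m + 1)).eval (x ^ 2)
    set v₁ := (Q (m + 1)).eval (x ^ 2)
    linear_combination (1 - d * x ^ 2) * mul_eq_of_three_term hrec h₀ h₁
      + (a * d * x ^ 4 * u₁ ^ 2 * (x₂ * v₀ + x * u₀) + 2 * x * (1 - d * x ^ 2) * u₁ * v₀ * v₁) * hE
  · rw [if_neg (by grind)] at h₁
    rw [if_pos (by grind)] at h₀
    rw [if_pos (by grind), hQodd (m + 1) (by omega) hodd, hPodd (m + 1) (by omega) hodd]
    simp only [eval_mul, eval_sub, eval_pow, eval_one, eval_C, eval_X, Nat.add_sub_cancel]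
    linear_combination mul_eq_of_three_term hrec h₀ h₁

end Edwards

theorem edwards_xn_PQ_general {k : Type*} [Field k] (a d x y : k)
    (hE : a * x ^ 2 + y ^ 2 = 1 + d * x ^ 2 * y ^ 2)
    (P Q : ℕ → Polynomial k)
    (hP1 : P 1 = 1) (hQ1 : Q 1 = 1)
    (hP2 : P 2 = C 2 * (1 - C d * X))
    (hQ2 : Q 2 = 1 - C (a * d) * X ^ 2)
    (hPeven : ∀ n, 2 ≤ n → Even n → P (n + 1)
      = C 2 * (1 - C a * X) * (1 - C d * X) * P n * Q (n - 1) * Q n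
        - P (n - 1) * ((1 - C d * X) * (Q n) ^ 2
            - C (a * d) * X ^ 2 * (1 - C a * X) * (P n) ^ 2))
    (hQeven : ∀ n, 2 ≤ n → Even n → Q (n + 1)
      = Q (n - 1) * ((1 - C d * X) * (Q n) ^ 2
          - C (a * d) * X ^ 2 * (1 - C a * X) * (P n) ^ 2))
    (hPodd : ∀ n, 2 ≤ n → Odd n → P (n + 1)
      = C 2 * (1 - C d * X) * P n * Q (n - 1) * Q n
        - P (n - 1) * ((Q n) ^ 2 - C (a * d) * X ^ 2 * (P n) ^ 2))
    (hQodd : ∀ n, 2 ≤ n → Odd n → Q (n + 1)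
      = Q (n - 1) * ((Q n) ^ 2 - C (a * d) * X ^ 2 * (P n) ^ 2))
    (pts : ℕ → k × k)
    (hpts1 : pts 1 = (x, y))
    (hptsS : ∀ n, 1 ≤ n → pts (n + 1)
      = (((pts n).1 * y + x * (pts n).2) / (1 + d * (pts n).1 * x * (pts n).2 * y),
         ((pts n).2 * y - a * (pts n).1 * x) / (1 - d * (pts n).1 * x * (pts n).2 * y)))
    (hden : ∀ n, 1 ≤ n → 1 + d * (pts n).1 * x * (pts n).2 * y ≠ 0
        ∧ 1 - d * (pts n).1 * x * (pts n).2 * y ≠ 0)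
    (hQne : ∀ n, 1 ≤ n → (Q n).eval (x ^ 2) ≠ 0) :
    ∀ n, 1 ≤ n → (pts n).1
      = if Even n then x * y * (P n).eval (x ^ 2) / (Q n).eval (x ^ 2)
        else x * (P n).eval (x ^ 2) / (Q n).eval (x ^ 2) := by
  have hcleared : ∀ n, 1 ≤ n →
      (pts n).1 * (Q n).eval (x ^ 2) = (if Even n then x * y else x) * (P n).eval (x ^ 2) ∧
      (pts (n + 1)).1 * (Q (n + 1)).eval (x ^ 2)
        = (if Even (n + 1) then x * y else x) * (P (n + 1)).eval (x ^ 2) := by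
    intro n hn
    induction n, hn using Nat.le_induction with
    | base =>
      refine ⟨by simp [hpts1, hP1, hQ1], ?_⟩
      have hdouble : (edwardsAdd a d (x, y) (x, y)).1 * (1 - a * d * x ^ 4)
          = 2 * (1 - d * x ^ 2) * x * y :=
        OnEdwards.fst_edwardsAdd_self hE (by simpa [hpts1] using (hden 1 le_rfl).1)
      have hpts2 : pts 2 = edwardsAdd a d (x, y) (x, y) := by rw [hptsS 1 le_rfl, hpts1]; rfl
      rw [show 1 + 1 = 2 from rfl, hpts2, hP2, hQ2, if_pos even_two]
      simp only [eval_mul, eval_sub, eval_pow, eval_one, eval_C, eval_X]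
      linear_combination hdouble
    | succ m hm ih =>
      exact ⟨ih.2, mul_eval_Q_add_two_of_recurrence hE hPeven hQeven hPodd hQodd hm
        (fst_multiple_recurrence (q := (x, y)) hE hpts1 hptsS hden hm) ih.1 ih.2⟩
  intro n hn
  have h := (hcleared n hn).1
  split_ifs at h ⊢ <;> exact (eq_div_iff (hQne n hn)).2 h

/-- Theorem PQ: with Pₙ, Qₙ defined by the stated recursions,
the x-coordinate of [n](x,y) under the Edwards group law equals
x·y·Pₙ(x²)/Qₙ(x²) for n even and x·Pₙ(x²)/Qₙ(x²) for n odd. -/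
theorem edwards_xn_PQ {k : Type*} [Field k] (a d x y : k)
    (hchar : (2 : k) ≠ 0) (ha : a ≠ 0) (hd : d ≠ 0) (had : a ≠ d)
    (hE : a * x ^ 2 + y ^ 2 = 1 + d * x ^ 2 * y ^ 2)
    (P Q : ℕ → Polynomial k)
    (hP1 : P 1 = 1) (hQ1 : Q 1 = 1)
    (hP2 : P 2 = C 2 * (1 - C d * X))
    (hQ2 : Q 2 = 1 - C (a * d) * X ^ 2)
    (hPeven : ∀ n, 2 ≤ n → Even n → P (n + 1)
      = C 2 * (1 - C a * X) * (1 - C d * X) * P n * Q (n - 1) * Q n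
        - P (n - 1) * ((1 - C d * X) * (Q n) ^ 2
            - C (a * d) * X ^ 2 * (1 - C a * X) * (P n) ^ 2))
    (hQeven : ∀ n, 2 ≤ n → Even n → Q (n + 1)
      = Q (n - 1) * ((1 - C d * X) * (Q n) ^ 2
          - C (a * d) * X ^ 2 * (1 - C a * X) * (P n) ^ 2))
    (hPodd : ∀ n, 2 ≤ n → Odd n → P (n + 1)
      = C 2 * (1 - C d * X) * P n * Q (n - 1) * Q n
        - P (n - 1) * ((Q n) ^ 2 - C (a * d) * X ^ 2 * (P n) ^ 2))
    (hQodd : ∀ n, 2 ≤ n → Odd n → Q (n + 1)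
      = Q (n - 1) * ((Q n) ^ 2 - C (a * d) * X ^ 2 * (P n) ^ 2))
    (pts : ℕ → k × k)
    (hpts1 : pts 1 = (x, y))
    (hptsS : ∀ n, 1 ≤ n → pts (n + 1)
      = (((pts n).1 * y + x * (pts n).2) / (1 + d * (pts n).1 * x * (pts n).2 * y),
         ((pts n).2 * y - a * (pts n).1 * x) / (1 - d * (pts n).1 * x * (pts n).2 * y)))
    (hden : ∀ n, 1 ≤ n → 1 + d * (pts n).1 * x * (pts n).2 * y ≠ 0
        ∧ 1 - d * (pts n).1 * x * (pts n).2 * y ≠ 0)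
    (hQne : ∀ n, 1 ≤ n → (Q n).eval (x ^ 2) ≠ 0) :
    ∀ n, 1 ≤ n → (pts n).1
      = if Even n then x * y * (P n).eval (x ^ 2) / (Q n).eval (x ^ 2)
        else x * (P n).eval (x ^ 2) / (Q n).eval (x ^ 2) :=
  edwards_xn_PQ_general a d x y hE P Q hP1 hQ1 hP2 hQ2 hPeven hQeven hPodd hQodd pts hpts1 hptsS
    hden hQne
end

section
/- On the Edwards curve x² + y² + x²y² = 1 (the case a = 1, d = −1 of a twisted Edwards curve after rewriting), doubling a point (s,c) gives the point with x-coordinate 2sc(c²+1)/(c⁴+1) and y-coordinate (−c⁴ − 2c² + 1)/(c⁴ − 2c² − 1), provided c⁴ + 1 ≠ 0 and c⁴ − 2c² − 1 ≠ 0. -/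
/-! On the curve, `s² (1 + c²) = 1 - c²`, so multiplying the denominators `1 ∓ s²c²` of the
doubling formula by `1 + c²` turns them into `c⁴ + 1` and `-(c⁴ - 2c² - 1)`. Hence they are
nonzero, and after cross-multiplying each coordinate identity is a multiple of the curve
equation. -/

namespace GaussCurve

section CommRing

variable {R : Type*} [CommRing R] {s c : R}

theorem one_sub_mul_one_add_sq (hE : s ^ 2 + c ^ 2 + s ^ 2 * c ^ 2 = 1) :
    (1 - s * s * c * c) * (1 + c ^ 2) = c ^ 4 + 1 := by
  linear_combination (-c ^ 2) * hE

theorem one_add_mul_one_add_sq (hE : s ^ 2 + c ^ 2 + s ^ 2 * c ^ 2 = 1) :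
    (1 + s * s * c * c) * (1 + c ^ 2) = -(c ^ 4 - 2 * c ^ 2 - 1) := by
  linear_combination c ^ 2 * hE

end CommRing

variable {k : Type*} [Field k] {s c : k}

theorem double_fst (hE : s ^ 2 + c ^ 2 + s ^ 2 * c ^ 2 = 1) (h1 : c ^ 4 + 1 ≠ 0) :
    (s * c + s * c) / (1 - s * s * c * c) = 2 * s * c * (c ^ 2 + 1) / (c ^ 4 + 1) := by
  have hden : 1 - s * s * c * c ≠ 0 :=
    left_ne_zero_of_mul (one_sub_mul_one_add_sq hE ▸ h1)
  rw [div_eq_div_iff hden h1]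
  linear_combination 2 * s * c ^ 3 * hE

theorem double_snd (hE : s ^ 2 + c ^ 2 + s ^ 2 * c ^ 2 = 1) (h2 : c ^ 4 - 2 * c ^ 2 - 1 ≠ 0) :
    (c * c - s * s) / (1 + s * s * c * c)
      = (-c ^ 4 - 2 * c ^ 2 + 1) / (c ^ 4 - 2 * c ^ 2 - 1) := by
  have hden : 1 + s * s * c * c ≠ 0 :=
    left_ne_zero_of_mul (one_add_mul_one_add_sq hE ▸ neg_ne_zero.mpr h2)
  rw [div_eq_div_iff hden h2]
  linear_combination (c ^ 4 + 1) * hE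

end GaussCurve

theorem gauss_curve_doubling_general {k : Type*} [Field k] (s c : k)
    (hE : s ^ 2 + c ^ 2 + s ^ 2 * c ^ 2 = 1)
    (h1 : c ^ 4 + 1 ≠ 0) (h2 : c ^ 4 - 2 * c ^ 2 - 1 ≠ 0) :
    (s * c + s * c) / (1 - s * s * c * c) = 2 * s * c * (c ^ 2 + 1) / (c ^ 4 + 1) ∧
    (c * c - s * s) / (1 + s * s * c * c)
      = (-c ^ 4 - 2 * c ^ 2 + 1) / (c ^ 4 - 2 * c ^ 2 - 1) :=
  ⟨GaussCurve.double_fst hE h1, GaussCurve.double_snd hE h2⟩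

/-- doubling on Gauss's curve s² + c² + s²c² = 1 (the Edwards
curve with a = 1, d = −1). -/
theorem gauss_curve_doubling {k : Type*} [Field k] (s c : k)
    (hchar : (2 : k) ≠ 0)
    (hE : s ^ 2 + c ^ 2 + s ^ 2 * c ^ 2 = 1)
    (h1 : c ^ 4 + 1 ≠ 0) (h2 : c ^ 4 - 2 * c ^ 2 - 1 ≠ 0) :
    (s * c + s * c) / (1 - s * s * c * c) = 2 * s * c * (c ^ 2 + 1) / (c ^ 4 + 1) ∧
    (c * c - s * s) / (1 + s * s * c * c)
      = (-c ^ 4 - 2 * c ^ 2 + 1) / (c ^ 4 - 2 * c ^ 2 - 1) :=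
  gauss_curve_doubling_general s c hE h1 h2
end
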